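/- arXiv:1911.04743 — 7 statements merged into one kernel-verified Lean document; each statement's English description precedes it below -/
import Mathlib

section
/- For k ∈ {1, 2}, in every finite simple undirected connected graph G, no pessimistic player with k-local information is unhappy with respect to the SUM-cost; consequently every finite simple undirected connected graph is a sum-swap equilibrium for pessimistic players with k-local information. -/
open SimpleGraph

namespace SwapGame

/-- The set of vertices within distance `k` of `u` in `G` (the `k`-neighborhood). -/
def ball {V : Type} (G : SimpleGraph V) (u : V) (k : ℕ) : Set V :=
  {v | G.edist u v ≤ (k : ℕ∞)}

/-- The graph obtained from `G` by the edge swap `(v, w)` at `u`: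
remove the edge `{u, v}` and add the edge `{u, w}`. -/
def swapGraph {V : Type} (G : SimpleGraph V) (u v w : V) : SimpleGraph V :=
  SimpleGraph.fromEdgeSet ((G.edgeSet \ {s(u, v)}) ∪ {s(u, w)})

/-- The edge swap `(v, w)` at `u` is a legal move for a player with `k`-local information:
`v` is a neighbor of `u` and `w` is a non-neighbor (other than `u`) within distance `k`. -/
def ValidSwap {V : Type} (G : SimpleGraph V) (k : ℕ) (u v w : V) : Prop :=
  G.Adj u v ∧ G.edist u w ≤ (k : ℕ∞) ∧ ¬ G.Adj u w ∧ w ≠ u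

/-- `H` (a graph on `W`, with `ι` identifying the view inside `H`) is a finite connected
graph compatible with `u`'s `k`-local view in `G`. -/
def Compatible {V : Type} (G : SimpleGraph V) (k : ℕ) (u : V)
    {W : Type} (H : SimpleGraph W) (ι : V → W) : Prop :=
  Finite W ∧ H.Connected ∧ Set.InjOn ι (ball G u k) ∧
  {x : W | H.edist (ι u) x ≤ (k : ℕ∞)} = ι '' ball G u k ∧
  ∀ a ∈ ball G u k, ∀ b ∈ ball G u k, (H.Adj (ι a) (ι b) ↔ G.Adj a b)

/-- SUM-cost of player `u` in `H` (`⊤` when `H` is disconnected). -/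
noncomputable def cSum {W : Type} (H : SimpleGraph W) (u : W) : ℕ∞ :=
  ∑' v, H.edist u v

/-- MAX-cost (eccentricity) of player `u` in `H` (`⊤` when `H` is disconnected). -/
noncomputable def cMax {W : Type} (H : SimpleGraph W) (u : W) : ℕ∞ :=
  ⨆ v, H.edist u v

/-- A pessimistic player `u` with `k`-local information is unhappy in `G` w.r.t. the
SUM-cost via the edge swap `(v, w)`: the swap strictly decreases `u`'s cost in every
compatible global graph. -/
def UnhappySumVia {V : Type} (G : SimpleGraph V) (k : ℕ) (u v w : V) : Prop :=
  ValidSwap G k u v w ∧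
  ∀ (W : Type) (H : SimpleGraph W) (ι : V → W), Compatible G k u H ι →
    cSum (swapGraph H (ι u) (ι v) (ι w)) (ι u) < cSum H (ι u)

/-- Pessimistic unhappiness w.r.t. the MAX-cost via the edge swap `(v, w)`. -/
def UnhappyMaxVia {V : Type} (G : SimpleGraph V) (k : ℕ) (u v w : V) : Prop :=
  ValidSwap G k u v w ∧
  ∀ (W : Type) (H : SimpleGraph W) (ι : V → W), Compatible G k u H ι →
    cMax (swapGraph H (ι u) (ι v) (ι w)) (ι u) < cMax H (ι u)

/-- Weakly pessimistic unhappiness w.r.t. the SUM-cost via the edge swap `(v, w)`: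
the swap does not increase `u`'s cost in any compatible global graph. -/
def WeakUnhappySumVia {V : Type} (G : SimpleGraph V) (k : ℕ) (u v w : V) : Prop :=
  ValidSwap G k u v w ∧
  ∀ (W : Type) (H : SimpleGraph W) (ι : V → W), Compatible G k u H ι →
    cSum (swapGraph H (ι u) (ι v) (ι w)) (ι u) ≤ cSum H (ι u)

/-- Weakly pessimistic unhappiness w.r.t. the MAX-cost via the edge swap `(v, w)`. -/
def WeakUnhappyMaxVia {V : Type} (G : SimpleGraph V) (k : ℕ) (u v w : V) : Prop :=
  ValidSwap G k u v w ∧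
  ∀ (W : Type) (H : SimpleGraph W) (ι : V → W), Compatible G k u H ι →
    cMax (swapGraph H (ι u) (ι v) (ι w)) (ι u) ≤ cMax H (ι u)

/-- Optimistic unhappiness w.r.t. the SUM-cost via the edge swap `(v, w)`:
the swap strictly decreases `u`'s cost in some compatible global graph
(with the swapped graph connected). -/
def OptUnhappySumVia {V : Type} (G : SimpleGraph V) (k : ℕ) (u v w : V) : Prop :=
  ValidSwap G k u v w ∧
  ∃ (W : Type) (H : SimpleGraph W) (ι : V → W), Compatible G k u H ι ∧
    (swapGraph H (ι u) (ι v) (ι w)).Connected ∧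
    cSum (swapGraph H (ι u) (ι v) (ι w)) (ι u) < cSum H (ι u)

/-- Optimistic unhappiness w.r.t. the MAX-cost via the edge swap `(v, w)`. -/
def OptUnhappyMaxVia {V : Type} (G : SimpleGraph V) (k : ℕ) (u v w : V) : Prop :=
  ValidSwap G k u v w ∧
  ∃ (W : Type) (H : SimpleGraph W) (ι : V → W), Compatible G k u H ι ∧
    (swapGraph H (ι u) (ι v) (ι w)).Connected ∧
    cMax (swapGraph H (ι u) (ι v) (ι w)) (ι u) < cMax H (ι u)

/-- Sum-swap equilibrium for pessimistic players with `k`-local information. -/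
def SumEquilibrium {V : Type} (G : SimpleGraph V) (k : ℕ) : Prop :=
  ∀ u : V, ¬ ∃ v w, UnhappySumVia G k u v w

/-- Max-swap equilibrium for pessimistic players with `k`-local information. -/
def MaxEquilibrium {V : Type} (G : SimpleGraph V) (k : ℕ) : Prop :=
  ∀ u : V, ¬ ∃ v w, UnhappyMaxVia G k u v w

/-- Sum-swap equilibrium for weakly pessimistic players with `k`-local information. -/
def WeakSumEquilibrium {V : Type} (G : SimpleGraph V) (k : ℕ) : Prop :=
  ∀ u : V, ¬ ∃ v w, WeakUnhappySumVia G k u v w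

/-- Max-swap equilibrium for weakly pessimistic players with `k`-local information. -/
def WeakMaxEquilibrium {V : Type} (G : SimpleGraph V) (k : ℕ) : Prop :=
  ∀ u : V, ¬ ∃ v w, WeakUnhappyMaxVia G k u v w

/-- Sum-swap equilibrium for optimistic players with `k`-local information. -/
def OptSumEquilibrium {V : Type} (G : SimpleGraph V) (k : ℕ) : Prop :=
  ∀ u : V, ¬ ∃ v w, OptUnhappySumVia G k u v w

/-- Max-swap equilibrium for optimistic players with `k`-local information. -/
def OptMaxEquilibrium {V : Type} (G : SimpleGraph V) (k : ℕ) : Prop :=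
  ∀ u : V, ¬ ∃ v w, OptUnhappyMaxVia G k u v w

/-- Social SUM-cost of a (connected, finite) graph, as a natural number. -/
noncomputable def scSum {W : Type} [Fintype W] (H : SimpleGraph W) : ℕ :=
  ∑ u : W, ∑ v : W, H.dist u v

/-- Social MAX-cost of a (connected, finite) graph, as a natural number. -/
noncomputable def scMax {W : Type} [Fintype W] (H : SimpleGraph W) : ℕ :=
  ∑ u : W, Finset.univ.sup (H.dist u)

/-- Price of anarchy over `n`-vertex trees for a given notion of equilibrium and
social cost: (max social cost of an equilibrium tree) / (min social cost of a tree). -/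
noncomputable def PoA (n : ℕ) (eqPred : SimpleGraph (Fin n) → Prop)
    (sc : SimpleGraph (Fin n) → ℕ) : ℚ :=
  ((sSup {m : ℕ | ∃ T : SimpleGraph (Fin n), T.IsTree ∧ eqPred T ∧ sc T = m} : ℕ) : ℚ) /
  ((sInf {m : ℕ | ∃ T : SimpleGraph (Fin n), T.IsTree ∧ sc T = m} : ℕ) : ℚ)

/-! The view of `u` is itself a compatible global graph: the subgraph induced by the ball of
radius `k`, in which, for `k ≤ 2`, every vertex lies within distance 2 of `u`. In such a graph the
swap `(v, w)` cannot lower `u`'s SUM-cost: `v` moves from distance 1 to at least 2, `w` from at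
most 2 to at least 1, and no other vertex gets closer. Hence no swap helps in every compatible
graph. -/

theorem _root_.ENat.tsum_le_tsum {ι : Type*} {f g : ι → ℕ∞} (h : ∀ i, f i ≤ g i) :
    ∑' i, f i ≤ ∑' i, g i :=
  Summable.tsum_le_tsum h (hasSum_of_isLUB _ isLUB_iSup).summable
    (hasSum_of_isLUB _ isLUB_iSup).summable

lemma two_le_edist_of_not_adj {W : Type} {H : SimpleGraph W} {u x : W} (hux : u ≠ x)
    (h : ¬ H.Adj u x) : 2 ≤ H.edist u x := by
  rw [← one_add_one_eq_two]
  refine Order.add_one_le_of_lt (not_le.mp fun h1 => ?_)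
  exact (H.edist_le_one_iff_adj_or_eq.mp h1).elim h hux

lemma eq_or_adj_of_swapGraph_adj {W : Type} {H : SimpleGraph W} {u v w x : W}
    (h : (swapGraph H u v w).Adj u x) : x = w ∨ (x ≠ v ∧ H.Adj u x) := by
  rw [swapGraph, fromEdgeSet_adj] at h
  rcases h.1 with ⟨hH, hv⟩ | hw
  · simp only [Set.mem_singleton_iff, Sym2.congr_right] at hv
    exact Or.inr ⟨hv, hH⟩
  · simp only [Set.mem_singleton_iff, Sym2.congr_right] at hw
    exact Or.inl hw

lemma edist_swap_le_edist_swapGraph {W : Type} [DecidableEq W] (H : SimpleGraph W) {u v w : W}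
    (hrad : ∀ x, H.edist u x ≤ 2) (hv : H.Adj u v) (hw : ¬ H.Adj u w) (hwu : w ≠ u) (x : W) :
    H.edist u (Equiv.swap v w x) ≤ (swapGraph H u v w).edist u x := by
  by_cases hxu : x = u
  · subst hxu
    rw [Equiv.swap_apply_of_ne_of_ne hv.ne (Ne.symm hwu), edist_self]
    exact zero_le
  rcases eq_or_ne x v with rfl | hxv
  · rw [Equiv.swap_apply_left]
    refine (hrad w).trans (two_le_edist_of_not_adj (Ne.symm hxu) fun h => ?_)
    rcases eq_or_adj_of_swapGraph_adj h with h | h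
    · exact hw (h ▸ hv)
    · exact h.1 rfl
  rcases eq_or_ne x w with rfl | hxw
  · rw [Equiv.swap_apply_right, edist_eq_one_iff_adj.mpr hv]
    exact Order.one_le_iff_pos.mpr (edist_pos_of_ne (Ne.symm hxu))
  rw [Equiv.swap_apply_of_ne_of_ne hxv hxw]
  by_cases hux : H.Adj u x
  · rw [edist_eq_one_iff_adj.mpr hux]
    exact Order.one_le_iff_pos.mpr (edist_pos_of_ne (Ne.symm hxu))
  refine (hrad x).trans (two_le_edist_of_not_adj (Ne.symm hxu) fun h => ?_)
  rcases eq_or_adj_of_swapGraph_adj h with h | h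
  · exact hxw h
  · exact hux h.2

lemma cSum_le_cSum_swapGraph {W : Type} (H : SimpleGraph W) {u v w : W}
    (hrad : ∀ x, H.edist u x ≤ 2) (hv : H.Adj u v) (hw : ¬ H.Adj u w) (hwu : w ≠ u) :
    cSum H u ≤ cSum (swapGraph H u v w) u := by
  classical
  rw [cSum, cSum, ← (Equiv.swap v w).tsum_eq]
  exact ENat.tsum_le_tsum (edist_swap_le_edist_swapGraph H hrad hv hw hwu)

lemma mem_ball_self {V : Type} (G : SimpleGraph V) (u : V) (k : ℕ) : u ∈ ball G u k := by
  simp [ball]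

open Classical in
/-- Identifies `u`'s view with the vertices of `G.induce (ball G u k)`; vertices outside the
ball, which the view does not contain, are sent to `u`. -/
noncomputable def toBall {V : Type} (G : SimpleGraph V) (u : V) (k : ℕ) (x : V) : ball G u k :=
  if h : x ∈ ball G u k then ⟨x, h⟩ else ⟨u, mem_ball_self G u k⟩

lemma toBall_of_mem {V : Type} {G : SimpleGraph V} {u x : V} {k : ℕ} (hx : x ∈ ball G u k) :
    toBall G u k x = ⟨x, hx⟩ :=
  dif_pos hx

/-- A shortest walk from `u` to a vertex of the ball stays inside the ball. -/
lemma edist_induce_ball_le {V : Type} (G : SimpleGraph V) (u : V) (k : ℕ) (x : ball G u k) :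
    (G.induce (ball G u k)).edist ⟨u, mem_ball_self G u k⟩ x ≤ k := by
  classical
  have hx : G.edist u x ≤ k := x.2
  obtain ⟨p, hp⟩ := exists_walk_of_edist_ne_top (ne_top_of_le_ne_top (ENat.natCast_ne_top k) hx)
  have hsupp : ∀ y ∈ p.support, y ∈ ball G u k := fun y hy =>
    calc G.edist u y ≤ (p.takeUntil y hy).length := edist_le _
      _ ≤ p.length := by exact_mod_cast p.length_takeUntil_le_length hy
      _ ≤ k := hp ▸ hx
  calc (G.induce (ball G u k)).edist ⟨u, mem_ball_self G u k⟩ x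
      ≤ (p.induce _ hsupp).length := edist_le _
    _ = p.length := by
        rw [← Walk.length_map (Embedding.induce _).toHom, Walk.map_induce]
        rfl
    _ ≤ k := hp ▸ hx

lemma compatible_induce_ball {V : Type} [Finite V] (G : SimpleGraph V) (u : V) (k : ℕ) :
    Compatible G k u (G.induce (ball G u k)) (toBall G u k) := by
  have hrad (x : ball G u k) : (G.induce (ball G u k)).edist (toBall G u k u) x ≤ k := by
    rw [toBall_of_mem (mem_ball_self G u k)]
    exact edist_induce_ball_le G u k x
  refine ⟨inferInstance, ?_, ?_, ?_, ?_⟩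
  · have : Nonempty (ball G u k) := ⟨toBall G u k u⟩
    refine connected_iff_exists_forall_reachable _ |>.mpr ⟨toBall G u k u, fun x => ?_⟩
    exact reachable_of_edist_ne_top (ne_top_of_le_ne_top (ENat.natCast_ne_top k) (hrad x))
  · intro a ha b hb hab
    rw [toBall_of_mem ha, toBall_of_mem hb] at hab
    exact congrArg Subtype.val hab
  · refine Set.eq_of_subset_of_subset (fun x _ => ⟨x, x.2, toBall_of_mem x.2⟩)
      (fun x _ => hrad x)
  · intro a ha b hb
    rw [toBall_of_mem ha, toBall_of_mem hb, induce_adj]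

lemma not_unhappySumVia {V : Type} [Finite V] (G : SimpleGraph V) {k : ℕ} (hk : k ≤ 2)
    (u v w : V) : ¬ UnhappySumVia G k u v w := by
  rintro ⟨⟨hv, hw, hnadj, hwu⟩, hlt⟩
  obtain ⟨-, -, hinj, -, hadj⟩ := compatible_induce_ball G u k
  have hu : u ∈ ball G u k := mem_ball_self G u k
  have hk0 : k ≠ 0 := by
    rintro rfl
    exact hwu (edist_eq_zero_iff.mp (nonpos_iff_eq_zero.mp (by exact_mod_cast hw))).symm
  have hvb : v ∈ ball G u k := by
    change G.edist u v ≤ k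
    rw [edist_eq_one_iff_adj.mpr hv]
    exact_mod_cast Nat.one_le_iff_ne_zero.mpr hk0
  refine (hlt _ _ _ (compatible_induce_ball G u k)).not_ge (cSum_le_cSum_swapGraph _ ?_
    ((hadj u hu v hvb).mpr hv) (mt (hadj u hu w hw).mp hnadj) (hinj.ne hw hu hwu))
  intro x
  rw [toBall_of_mem hu]
  exact (edist_induce_ball_le G u k x).trans (by exact_mod_cast hk)

theorem stmt0_general {V : Type} [Fintype V] (G : SimpleGraph V)
    (k : ℕ) (hk : k = 1 ∨ k = 2) :
    (∀ u : V, ¬ ∃ v w, UnhappySumVia G k u v w) ∧ SumEquilibrium G k := by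
  have hk2 : k ≤ 2 := by omega
  have h (u : V) : ¬ ∃ v w, UnhappySumVia G k u v w :=
    fun ⟨v, w, hvw⟩ => not_unhappySumVia G hk2 u v w hvw
  exact ⟨h, h⟩

theorem stmt0 {V : Type} [Fintype V] (G : SimpleGraph V) (hG : G.Connected)
    (k : ℕ) (hk : k = 1 ∨ k = 2) :
    (∀ u : V, ¬ ∃ v w, UnhappySumVia G k u v w) ∧ SumEquilibrium G k :=
  stmt0_general G k hk

end SwapGame
end

section
/- For k ∈ {1, 2}, in every finite simple undirected connected graph G, no pessimistic player with k-local information is unhappy with respect to the MAX-cost; consequently every finite simple undirected connected graph is a max-swap equilibrium for pessimistic players with k-local information. -/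
open SimpleGraph

namespace SwapGame

private lemma mid_of_walk_two {V : Type} {G : SimpleGraph V} {u a : V}
    (p : G.Walk u a) (h : p.length = 2) : ∃ b : V, G.Adj u b ∧ G.Adj b a := by
  cases p with
  | nil => simp at h
  | cons h1 q =>
    cases q with
    | nil => simp at h
    | cons h2 r =>
      cases r with
      | nil => exact ⟨_, h1, h2⟩
      | cons h3 s => simp [SimpleGraph.Walk.length_cons] at h

theorem stmt1 {V : Type} [Fintype V] (G : SimpleGraph V) (hG : G.Connected)
    (k : ℕ) (hk : k = 1 ∨ k = 2) :
    (∀ u : V, ¬ ∃ v w, UnhappyMaxVia G k u v w) ∧ MaxEquilibrium G k := by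
  have k1 : (1 : ℕ∞) ≤ (k : ℕ∞) := by rcases hk with h | h <;> subst h <;> norm_num
  have k2 : (k : ℕ∞) ≤ 2 := by rcases hk with h | h <;> subst h <;> norm_num
  have main : ∀ u : V, ¬ ∃ v w, UnhappyMaxVia G k u v w := by
    rintro u ⟨v, w, ⟨hadj, hwball, hwnadj, hwu⟩, hall⟩
    classical
    have huB : u ∈ ball G u k := by
      show G.edist u u ≤ (k : ℕ∞)
      rw [edist_self]; exact zero_le
    have hvB : v ∈ ball G u k := by
      show G.edist u v ≤ (k : ℕ∞)
      rw [edist_eq_one_iff_adj.mpr hadj]; exact k1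
    have hwB : w ∈ ball G u k := hwball
    set B := ball G u k with hB
    let H : SimpleGraph B := G.induce B
    let ι : V → B := fun x => if h : x ∈ B then ⟨x, h⟩ else ⟨u, huB⟩
    have hι : ∀ a (ha : a ∈ B), ι a = ⟨a, ha⟩ := fun a ha => dif_pos ha
    have hadjH : ∀ (a b : V) (ha : a ∈ B) (hb : b ∈ B),
        H.Adj ⟨a, ha⟩ ⟨b, hb⟩ ↔ G.Adj a b := fun a b ha hb => Iff.rfl
    -- key distance bound in the induced ball graph
    have key : ∀ x : B, H.edist (ι u) x ≤ (k : ℕ∞) := by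
      rintro ⟨a, ha⟩
      rw [hι u huB]
      have ha' : G.edist u a ≤ (k : ℕ∞) := ha
      have hne : G.edist u a ≠ ⊤ := fun h =>
        ENat.coe_ne_top k (top_le_iff.mp (h ▸ ha'))
      obtain ⟨n, hn0⟩ := WithTop.ne_top_iff_exists.mp hne
      have hn : (n : ℕ∞) = G.edist u a := by exact_mod_cast hn0
      have hnk : (n : ℕ∞) ≤ (k : ℕ∞) := by rw [hn]; exact ha'
      have hn2 : n ≤ 2 := by
        have h : (n : ℕ∞) ≤ 2 := by rw [hn]; exact ha'.trans k2
        norm_cast at h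
      interval_cases n
      · -- distance 0 : a = u
        rw [Nat.cast_zero] at hn
        have : u = a := edist_eq_zero_iff.mp hn.symm
        subst this
        rw [show (⟨u, ha⟩ : B) = ⟨u, huB⟩ from rfl, SimpleGraph.edist_self]
        exact zero_le
      · -- distance 1 : adjacent
        rw [Nat.cast_one] at hn
        have hA : G.Adj u a := edist_eq_one_iff_adj.mp hn.symm
        have hAH : H.Adj ⟨u, huB⟩ ⟨a, ha⟩ := (hadjH u a huB ha).mpr hA
        calc H.edist ⟨u, huB⟩ ⟨a, ha⟩ ≤ (hAH.toWalk.length : ℕ∞) := edist_le _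
          _ = (1 : ℕ∞) := by simp
          _ ≤ (k : ℕ∞) := k1
      · -- distance 2 : go through a midpoint
        obtain ⟨p, hp⟩ := exists_walk_of_edist_eq_coe hn.symm
        obtain ⟨b, hub, hba⟩ := mid_of_walk_two p hp
        have hbB : b ∈ B := by
          show G.edist u b ≤ (k : ℕ∞)
          rw [edist_eq_one_iff_adj.mpr hub]; exact k1
        have h1 : H.Adj ⟨u, huB⟩ ⟨b, hbB⟩ := (hadjH u b huB hbB).mpr hub
        have h2 : H.Adj ⟨b, hbB⟩ ⟨a, ha⟩ := (hadjH b a hbB ha).mpr hba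
        calc H.edist ⟨u, huB⟩ ⟨a, ha⟩
            ≤ H.edist ⟨u, huB⟩ ⟨b, hbB⟩ + H.edist ⟨b, hbB⟩ ⟨a, ha⟩ :=
              SimpleGraph.edist_triangle
          _ ≤ 1 + 1 := add_le_add
              (by rw [edist_eq_one_iff_adj.mpr h1]) (by rw [edist_eq_one_iff_adj.mpr h2])
          _ = (2 : ℕ∞) := by norm_num
          _ ≤ (k : ℕ∞) := hnk
    have hreach : ∀ x : B, H.Reachable (ι u) x := fun x =>
      reachable_of_edist_ne_top (ne_top_of_le_ne_top (ENat.coe_ne_top k) (key x))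
    have hnonempty : Nonempty B := ⟨⟨u, huB⟩⟩
    have hconn : H.Connected :=
      ⟨fun x y => (hreach x).symm.trans (hreach y)⟩
    have hcompat : Compatible G k u H ι := by
      refine ⟨Subtype.finite, hconn, ?_, ?_, ?_⟩
      · intro a ha b hb hab
        rw [hι a ha, hι b hb] at hab
        exact Subtype.mk_eq_mk.mp hab
      · ext x
        constructor
        · intro _
          exact ⟨x.1, x.2, by rw [hι x.1 x.2]⟩
        · intro _
          exact key x
      · intro a ha b hb
        rw [hι a ha, hι b hb]
        exact hadjH a b ha hb
    have hlt := hall B H ι hcompat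
    have hcmax : cMax H (ι u) ≤ 2 := iSup_le fun x => (key x).trans k2
    -- lower bound on the swapped graph's cost
    have hne' : ι u ≠ ι v := by
      rw [hι u huB, hι v hvB]
      intro h
      exact hadj.ne (Subtype.mk_eq_mk.mp h)
    have hvw : v ≠ w := by
      intro h; exact hwnadj (h ▸ hadj)
    have hnadj' : ¬ (swapGraph H (ι u) (ι v) (ι w)).Adj (ι u) (ι v) := by
      intro hA
      rw [swapGraph, fromEdgeSet_adj] at hA
      rcases hA.1 with hm | hm
      · exact hm.2 rfl
      · rw [Set.mem_singleton_iff, Sym2.eq_iff] at hm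
        rcases hm with ⟨-, h⟩ | ⟨h, -⟩
        · rw [hι v hvB, hι w hwB] at h
          exact hvw (Subtype.mk_eq_mk.mp h)
        · rw [hι u huB, hι w hwB] at h
          exact hwu (Subtype.mk_eq_mk.mp h).symm
    have e0 : (swapGraph H (ι u) (ι v) (ι w)).edist (ι u) (ι v) ≠ 0 := fun h0 =>
      hne' (edist_eq_zero_iff.mp h0)
    have e1 : (swapGraph H (ι u) (ι v) (ι w)).edist (ι u) (ι v) ≠ 1 := fun h1 =>
      hnadj' (edist_eq_one_iff_adj.mp h1)
    have e2 : (2 : ℕ∞) ≤ (swapGraph H (ι u) (ι v) (ι w)).edist (ι u) (ι v) := by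
      have h01 : (1 : ℕ∞) < (swapGraph H (ι u) (ι v) (ι w)).edist (ι u) (ι v) :=
        lt_of_le_of_ne (Order.one_le_iff_pos.mpr (pos_iff_ne_zero.mpr e0)) (Ne.symm e1)
      exact le_trans (by norm_num : (2 : ℕ∞) ≤ 1 + 1)
        ((ENat.add_one_le_iff (by norm_num : (1 : ℕ∞) ≠ ⊤)).mpr h01)
    have hcmax' : (2 : ℕ∞) ≤ cMax (swapGraph H (ι u) (ι v) (ι w)) (ι u) :=
      e2.trans (le_iSup (fun x => (swapGraph H (ι u) (ι v) (ι w)).edist (ι u) x) (ι v))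
    exact absurd (hlt.trans_le hcmax) (not_lt.mpr hcmax')
  exact ⟨main, main⟩

end SwapGame
end

section
/- For every k ≥ 3, there exist a finite simple undirected connected graph G_0 and a finite sequence G_0, G_1, …, G_T with T ≥ 1 and G_T = G_0 (as labeled graphs on the same vertex set) in which each G_{t+1} is obtained from G_t by a single edge swap performed by a player that is pessimistically unhappy in G_t with respect to the SUM-cost with k-local information via that swap; the same statement holds with respect to the MAX-cost. In particular, starting from a general (non-tree) graph, the SUM swap game and the MAX swap game by pessimistic players with k-local information admit best response cycles. -/
/-!
If the eccentricity `r` of a player `u` is at most `k`, then `u` sees all of `G`: a compatible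
graph `H` contains `G` as the induced subgraph on the ball of radius `k` around `u`, with the same
distances from `u`, and every other vertex of `H` lies farther than `k ≥ r`. Suppose the swap
brings the eccentricity of `u` in `G` below `r`. Then in `H` every vertex on the sphere of radius
`r` gets closer to `u`, and by induction so does every vertex beyond it, since the last edge of a
shortest path to such a vertex avoids `u` and survives the swap. Hence the swap lowers the
eccentricity of `u` in every compatible `H`, and it lowers the distance sum of `u` in every
compatible `H` as soon as it does so in `G`.

The cycle lives on 12 vertices: players `0`, `1`, `2` pass a single edge around among
themselves, each swap cutting the eccentricity of the mover from 3 to 2 and its distance sum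
from 18 to 17.
-/

open SimpleGraph

namespace SwapGame

open Finset

section Metric

variable {V W : Type} {G : SimpleGraph V} {H : SimpleGraph W}

theorem edist_le_edist_add_one_of_adj {u x y : V} (h : G.Adj y x) :
    G.edist u x ≤ G.edist u y + 1 :=
  G.edist_triangle.trans (add_le_add le_rfl (edist_eq_one_iff_adj.mpr h).le)

theorem exists_adj_edist_eq_of_edist_eq_add_one {u x : V} {n : ℕ} (h : G.edist u x = n + 1) :
    ∃ y, G.Adj y x ∧ G.edist u y = n := by
  obtain ⟨p, hp⟩ := exists_walk_of_edist_eq_coe (k := n + 1) (by exact_mod_cast h)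
  rw [← Walk.length_reverse] at hp
  cases hq : p.reverse with
  | nil => simp [hq] at hp
  | cons hxy q =>
    rw [hq, Walk.length_cons, add_left_inj] at hp
    refine ⟨_, hxy.symm, le_antisymm (hp ▸ edist_comm.trans_le (edist_le q)) ?_⟩
    have : (n : ℕ∞) + 1 ≤ G.edist u _ + 1 := h ▸ edist_le_edist_add_one_of_adj hxy.symm
    exact (WithTop.add_le_add_iff_right ENat.one_ne_top).mp this

theorem edist_le_add_one_iff {u x : V} {n : ℕ} :
    G.edist u x ≤ n + 1 ↔ G.edist u x ≤ n ∨ ∃ y, G.edist u y ≤ n ∧ G.Adj y x := by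
  constructor
  · intro h
    by_cases hn : G.edist u x ≤ n
    · exact .inl hn
    · lift G.edist u x to ℕ using ne_top_of_le_ne_top (by simp) h with d hd
      have hd' : d = n + 1 := by norm_cast at h hn; omega
      obtain ⟨y, hyx, hy⟩ := exists_adj_edist_eq_of_edist_eq_add_one (by rw [← hd, hd']; rfl)
      exact .inr ⟨y, hy.le, hyx⟩
  · rintro (h | ⟨y, hy, hyx⟩)
    · exact h.trans le_self_add
    · exact (edist_le_edist_add_one_of_adj hyx).trans (add_le_add hy le_rfl)

theorem edist_map_le (f : G →g H) (a b : V) : H.edist (f a) (f b) ≤ G.edist a b := by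
  by_cases hr : G.Reachable a b
  · obtain ⟨p, hp⟩ := hr.exists_walk_length_eq_edist
    exact hp ▸ (Walk.length_map f p).symm ▸ edist_le (p.map f)
  · simp [edist_eq_top_of_not_reachable hr]

theorem edist_map_eq_of_ball_subset_range (f : G ↪g H) {u a : V} {n : ℕ}
    (hrange : ∀ x, H.edist (f u) x ≤ n → x ∈ Set.range f) (ha : G.edist u a ≤ n) :
    H.edist (f u) (f a) = G.edist u a := by
  refine le_antisymm (edist_map_le f.toHom u a) ?_
  suffices ∀ m : ℕ, m ≤ n → ∀ a, H.edist (f u) (f a) = m → G.edist u a ≤ m by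
    have hle : H.edist (f u) (f a) ≤ n := (edist_map_le f.toHom u a).trans ha
    lift H.edist (f u) (f a) to ℕ using ne_top_of_le_ne_top (by simp) hle with m hm
    exact this m (by exact_mod_cast hle) a hm.symm
  intro m
  induction m with
  | zero =>
    intro _ a h
    simp [f.injective (edist_eq_zero_iff.mp h)]
  | succ m ih =>
    intro hmn a h
    obtain ⟨y, hya, hy⟩ := exists_adj_edist_eq_of_edist_eq_add_one (by exact_mod_cast h)
    obtain ⟨c, rfl⟩ := hrange y (hy.trans_le (by exact_mod_cast (Nat.le_succ m).trans hmn))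
    have hc := ih (Nat.le_of_succ_le hmn) c hy
    push_cast
    exact edist_le_add_one_iff.mpr (.inr ⟨c, hc, f.map_adj_iff.mp hya⟩)

end Metric

section Swap

variable {V W : Type}

theorem swapGraph_adj (G : SimpleGraph V) (u v w a b : V) :
    (swapGraph G u v w).Adj a b ↔
      ((G.Adj a b ∧ s(a, b) ≠ s(u, v)) ∨ s(a, b) = s(u, w)) ∧ a ≠ b := by
  simp only [swapGraph, fromEdgeSet_adj, Set.mem_union, Set.mem_sdiff, Set.mem_singleton_iff,
    mem_edgeSet]

theorem swapGraph_adj_of_adj {H : SimpleGraph W} {u v w a b : W} (h : H.Adj a b) (ha : a ≠ u)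
    (hb : b ≠ u) : (swapGraph H u v w).Adj a b := by
  refine (swapGraph_adj H u v w a b).mpr ⟨.inl ⟨h, fun he => ?_⟩, h.ne⟩
  rcases Sym2.eq_iff.mp he with ⟨rfl, -⟩ | ⟨-, rfl⟩ <;> contradiction

def swapGraphHom {G : SimpleGraph V} {H : SimpleGraph W} (f : G ↪g H) (u v w : V) :
    swapGraph G u v w →g swapGraph H (f u) (f v) (f w) where
  toFun := f
  map_rel' {a b} h := by
    have hinj : Function.Injective (Sym2.map f) := Sym2.map.injective f.injective
    rw [swapGraph_adj] at h ⊢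
    simp only [← Sym2.map_mk, hinj.eq_iff, hinj.ne_iff, f.map_adj_iff, f.injective.ne_iff]
    exact h

theorem edist_swapGraph_lt_of_le_edist {H : SimpleGraph W} {u v w x : W} {r : ℕ} (hr : 0 < r)
    (hsphere : ∀ z, H.edist u z = r → (swapGraph H u v w).edist u z < r)
    (hx : r ≤ H.edist u x) (hxtop : H.edist u x ≠ ⊤) :
    (swapGraph H u v w).edist u x < H.edist u x := by
  suffices ∀ n x, H.edist u x = ↑(r + n) → (swapGraph H u v w).edist u x < ↑(r + n) by
    lift H.edist u x to ℕ using hxtop with d hd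
    obtain ⟨n, rfl⟩ := Nat.exists_eq_add_of_le (by exact_mod_cast hx : r ≤ d)
    exact this n x hd.symm
  have hne : ∀ n z, H.edist u z = ↑(r + n) → z ≠ u := by
    rintro n z hz rfl
    rw [edist_self] at hz
    norm_cast at hz
    omega
  intro n
  induction n with
  | zero => exact hsphere
  | succ n ih =>
    intro x hx
    obtain ⟨y, hyx, hy⟩ := exists_adj_edist_eq_of_edist_eq_add_one (n := r + n) (by rw [hx]; rfl)
    have hyx' : (swapGraph H u v w).Adj y x :=
      swapGraph_adj_of_adj hyx (hne n y hy) (hne (n + 1) x hx)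
    calc (swapGraph H u v w).edist u x
        ≤ (swapGraph H u v w).edist u y + 1 := edist_le_edist_add_one_of_adj hyx'
      _ < ↑(r + n) + 1 := (ENat.add_lt_add_iff_right ENat.one_ne_top).mpr (ih y hy)
      _ = ↑(r + (n + 1)) := by push_cast; ring

end Swap

section Compatible

variable {V W : Type} {G : SimpleGraph V} {H : SimpleGraph W} {k r : ℕ} {u v w : V}
  {ι : V → W}

theorem ball_eq_univ_of_eccent_le (h : G.eccent u ≤ k) : ball G u k = Set.univ :=
  Set.eq_univ_of_forall fun _ => edist_le_eccent.trans h

theorem Compatible.injective (hc : Compatible G k u H ι) (hk : G.eccent u ≤ k) :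
    Function.Injective ι := by
  simpa [ball_eq_univ_of_eccent_le hk] using hc.2.2.1

def Compatible.embedding (hc : Compatible G k u H ι) (hk : G.eccent u ≤ k) : G ↪g H where
  toFun := ι
  inj' := hc.injective hk
  map_rel_iff' {a b} := by
    have hball := ball_eq_univ_of_eccent_le hk
    exact hc.2.2.2.2 a (hball ▸ trivial) b (hball ▸ trivial)

theorem Compatible.edist_le_iff_mem_range (hc : Compatible G k u H ι) (hk : G.eccent u ≤ k)
    (x : W) : H.edist (ι u) x ≤ k ↔ x ∈ Set.range ι := by
  have := hc.2.2.2.1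
  rw [ball_eq_univ_of_eccent_le hk, Set.image_univ] at this
  exact Set.ext_iff.mp this x

theorem Compatible.edist_eq (hc : Compatible G k u H ι) (hk : G.eccent u ≤ k) (a : V) :
    H.edist (ι u) (ι a) = G.edist u a :=
  edist_map_eq_of_ball_subset_range (hc.embedding hk)
    (fun x => (hc.edist_le_iff_mem_range hk x).mp) (edist_le_eccent.trans hk)

theorem Compatible.edist_swapGraph_le (hc : Compatible G k u H ι) (hk : G.eccent u ≤ k) (a : V) :
    (swapGraph H (ι u) (ι v) (ι w)).edist (ι u) (ι a) ≤ (swapGraph G u v w).edist u a :=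
  edist_map_le (swapGraphHom (hc.embedding hk) u v w) u a

theorem Compatible.edist_swapGraph_lt (hc : Compatible G k u H ι) (hecc : G.eccent u ≤ r)
    (hrk : r ≤ k) (hecc' : (swapGraph G u v w).eccent u < r) {x : W} (hx : x ∉ Set.range ι) :
    (swapGraph H (ι u) (ι v) (ι w)).edist (ι u) x < H.edist (ι u) x := by
  have hk : G.eccent u ≤ k := hecc.trans (by exact_mod_cast hrk)
  have hrk' : (r : ℕ∞) ≤ k := by exact_mod_cast hrk
  refine edist_swapGraph_lt_of_le_edist (r := r) (by exact_mod_cast pos_of_gt hecc') ?_ ?_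
    (edist_ne_top_iff_reachable.mpr (hc.2.1.preconnected _ _))
  · intro z hz
    obtain ⟨a, rfl⟩ := (hc.edist_le_iff_mem_range hk z).mp (hz.trans_le hrk')
    exact (hc.edist_swapGraph_le hk a).trans_lt (edist_le_eccent.trans_lt hecc')
  · rw [← hc.edist_le_iff_mem_range hk, not_le] at hx
    exact hrk'.trans hx.le

theorem Compatible.cSum_swapGraph_lt (hc : Compatible G k u H ι) (hecc : G.eccent u ≤ r)
    (hrk : r ≤ k) (hecc' : (swapGraph G u v w).eccent u < r)
    (hsum : cSum (swapGraph G u v w) u < cSum G u) :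
    cSum (swapGraph H (ι u) (ι v) (ι w)) (ι u) < cSum H (ι u) := by
  classical
  have hk : G.eccent u ≤ k := hecc.trans (by exact_mod_cast hrk)
  have := hc.1
  have := Fintype.ofFinite W
  have := Fintype.ofInjective ι (hc.injective hk)
  let e : V ↪ W := ⟨ι, hc.injective hk⟩
  simp only [cSum, tsum_fintype] at hsum ⊢
  rw [← sum_add_sum_compl (univ.map e), ← sum_add_sum_compl (univ.map e) (H.edist _),
    sum_map, sum_map]
  have hfar : ∀ x ∈ (univ.map e)ᶜ,
      (swapGraph H (ι u) (ι v) (ι w)).edist (ι u) x < H.edist (ι u) x := fun x hx =>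
    hc.edist_swapGraph_lt hecc hrk hecc' (by simpa [e] using hx)
  refine ENat.add_lt_add_of_lt_of_le (WithTop.sum_ne_top.mpr fun x hx => (hfar x hx).ne_top) ?_
    (sum_le_sum fun x hx => (hfar x hx).le)
  calc ∑ a, (swapGraph H (ι u) (ι v) (ι w)).edist (ι u) (e a)
      ≤ ∑ a, (swapGraph G u v w).edist u a := sum_le_sum fun a _ => hc.edist_swapGraph_le hk a
    _ < ∑ a, G.edist u a := hsum
    _ = ∑ a, H.edist (ι u) (e a) := sum_congr rfl fun a _ => (hc.edist_eq hk a).symm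

theorem Compatible.cMax_swapGraph_lt (hc : Compatible G k u H ι) (hecc : G.eccent u = r)
    (hrk : r ≤ k) (hecc' : (swapGraph G u v w).eccent u < r) :
    cMax (swapGraph H (ι u) (ι v) (ι w)) (ι u) < cMax H (ι u) := by
  have hk : G.eccent u ≤ k := hecc.trans_le (by exact_mod_cast hrk)
  have := hc.1
  change (swapGraph H (ι u) (ι v) (ι w)).eccent (ι u) < H.eccent (ι u)
  have hGH : G.eccent u ≤ H.eccent (ι u) :=
    iSup_le fun a => (hc.edist_eq hk a).symm.trans_le edist_le_eccent
  obtain ⟨x, hx⟩ := exists_edist_eq_eccent_of_finite (G := swapGraph H (ι u) (ι v) (ι w)) (ι u)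
  rw [← hx]
  by_cases hxι : x ∈ Set.range ι
  · obtain ⟨a, rfl⟩ := hxι
    calc _ ≤ (swapGraph G u v w).edist u a := hc.edist_swapGraph_le hk a
      _ < G.eccent u := edist_le_eccent.trans_lt (hecc ▸ hecc')
      _ ≤ H.eccent (ι u) := hGH
  · exact (hc.edist_swapGraph_lt hecc.le hrk hecc' hxι).trans_le edist_le_eccent

end Compatible

section Unhappy

variable {V : Type} {G : SimpleGraph V} {k r : ℕ} {u v w : V}

theorem unhappySumVia_of_eccent_lt (hv : G.Adj u v) (hw : ¬ G.Adj u w) (hwu : w ≠ u)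
    (hecc : G.eccent u ≤ r) (hrk : r ≤ k) (hecc' : (swapGraph G u v w).eccent u < r)
    (hsum : cSum (swapGraph G u v w) u < cSum G u) : UnhappySumVia G k u v w :=
  ⟨⟨hv, edist_le_eccent.trans (hecc.trans (by exact_mod_cast hrk)), hw, hwu⟩,
    fun _ _ _ hc => hc.cSum_swapGraph_lt hecc hrk hecc' hsum⟩

theorem unhappyMaxVia_of_eccent_lt (hv : G.Adj u v) (hw : ¬ G.Adj u w) (hwu : w ≠ u)
    (hecc : G.eccent u = r) (hrk : r ≤ k) (hecc' : (swapGraph G u v w).eccent u < r) :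
    UnhappyMaxVia G k u v w :=
  ⟨⟨hv, edist_le_eccent.trans (hecc.trans_le (by exact_mod_cast hrk)), hw, hwu⟩,
    fun _ _ _ hc => hc.cMax_swapGraph_lt hecc hrk hecc'⟩

end Unhappy

section BallFinset

variable {V : Type} [Fintype V] [DecidableEq V]

/-- The closed ball `ball G u n`, computed by breadth-first search so that `decide` can
evaluate it. -/
def ballFinset (G : SimpleGraph V) [DecidableRel G.Adj] (u : V) : ℕ → Finset V
  | 0 => {u}
  | n + 1 => ballFinset G u n ∪ ({a | ∃ b ∈ ballFinset G u n, G.Adj b a} : Finset V)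

variable {G : SimpleGraph V} [DecidableRel G.Adj] {u : V} {n : ℕ}

theorem mem_ballFinset {a : V} : a ∈ ballFinset G u n ↔ G.edist u a ≤ n := by
  induction n generalizing a with
  | zero => simp [ballFinset, eq_comm (a := u)]
  | succ n ih => simp [ballFinset, ih, edist_le_add_one_iff]

theorem eccent_le_iff_ballFinset_eq_univ : G.eccent u ≤ n ↔ ballFinset G u n = univ := by
  simp [eccent_le_iff, eq_univ_iff_forall, mem_ballFinset]

theorem cSum_eq_sum_card_compl_ballFinset (h : G.eccent u ≤ n) :
    cSum G u = ∑ m ∈ range n, #{a | a ∉ ballFinset G u m} := by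
  have hlayer : ∀ a, G.edist u a = #{m ∈ range n | a ∉ ballFinset G u m} := by
    intro a
    have ha : G.edist u a ≤ n := edist_le_eccent.trans h
    lift G.edist u a to ℕ using ne_top_of_le_ne_top (by simp) ha with d hd
    have : {m ∈ range n | a ∉ ballFinset G u m} = range d := by
      ext m
      simp only [mem_filter, mem_range, mem_ballFinset, ← hd, Nat.cast_le, not_le]
      norm_cast at ha
      omega
    rw [this, card_range]
  simp only [cSum, tsum_fintype, hlayer]
  norm_cast
  simp only [card_filter]
  exact sum_comm

end BallFinset

theorem unhappy_of_ballFinset {V : Type} [Fintype V] [DecidableEq V] {G G' : SimpleGraph V}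
    [DecidableRel G.Adj] [DecidableRel G'.Adj] {k r : ℕ} {u v w : V}
    (hG' : swapGraph G u v w = G') (hrk : r + 1 ≤ k)
    (hv : G.Adj u v) (hw : ¬ G.Adj u w) (hwu : w ≠ u)
    (hball : ballFinset G u (r + 1) = univ) (hfar : ballFinset G u r ≠ univ)
    (hball' : ballFinset G' u r = univ)
    (hsum : ∑ m ∈ range r, #{a | a ∉ ballFinset G' u m} <
      ∑ m ∈ range (r + 1), #{a | a ∉ ballFinset G u m}) :
    UnhappySumVia G k u v w ∧ UnhappyMaxVia G k u v w := by
  subst hG'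
  have hecc' : (swapGraph G u v w).eccent u ≤ r := eccent_le_iff_ballFinset_eq_univ.mpr hball'
  have hecc : G.eccent u = ↑(r + 1) := by
    refine le_antisymm (eccent_le_iff_ballFinset_eq_univ.mpr hball) ?_
    exact Order.add_one_le_of_lt (not_le.mp (mt eccent_le_iff_ballFinset_eq_univ.mp hfar))
  have hlt : (swapGraph G u v w).eccent u < ↑(r + 1) :=
    hecc'.trans_lt (by exact_mod_cast r.lt_succ_self)
  refine ⟨unhappySumVia_of_eccent_lt hv hw hwu hecc.le hrk hlt ?_,
    unhappyMaxVia_of_eccent_lt hv hw hwu hecc hrk hlt⟩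
  rw [cSum_eq_sum_card_compl_ballFinset hecc', cSum_eq_sum_card_compl_ballFinset hecc.le]
  exact_mod_cast hsum

/-- The rotation `i ↦ i + 1 (mod 3)` of each of the triples `0 1 2`, `3 4 5`, `6 7 8`, `9 10 11`
fixes these edges and maps `G₀ ↦ G₁ ↦ G₂ ↦ G₀`, so the three steps of the cycle are copies of
one another. -/
def baseEdges : List (Fin 12 × Fin 12) :=
  [(0, 3), (1, 4), (2, 5), (0, 6), (1, 7), (2, 8), (6, 4), (7, 5), (8, 3), (3, 4), (4, 5), (5, 3),
    (9, 0), (10, 1), (11, 2), (9, 2), (10, 0), (11, 1)]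

def G₀ : SimpleGraph (Fin 12) := fromRel fun a b => (a, b) ∈ (0, 2) :: baseEdges
def G₁ : SimpleGraph (Fin 12) := fromRel fun a b => (a, b) ∈ (0, 1) :: baseEdges
def G₂ : SimpleGraph (Fin 12) := fromRel fun a b => (a, b) ∈ (1, 2) :: baseEdges

instance : DecidableRel G₀.Adj := fun _ _ => inferInstanceAs (Decidable (_ ∧ _))
instance : DecidableRel G₁.Adj := fun _ _ => inferInstanceAs (Decidable (_ ∧ _))
instance : DecidableRel G₂.Adj := fun _ _ => inferInstanceAs (Decidable (_ ∧ _))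

theorem swapGraph_G₀ : swapGraph G₀ 0 2 1 = G₁ := by
  ext a b
  rw [swapGraph_adj]
  revert a b
  decide

theorem swapGraph_G₁ : swapGraph G₁ 1 0 2 = G₂ := by
  ext a b
  rw [swapGraph_adj]
  revert a b
  decide

theorem swapGraph_G₂ : swapGraph G₂ 2 1 0 = G₀ := by
  ext a b
  rw [swapGraph_adj]
  revert a b
  decide

theorem connected_G₀ : G₀.Connected := by
  have hecc : G₀.eccent 0 ≤ (3 : ℕ) := eccent_le_iff_ballFinset_eq_univ.mpr (by decide)
  exact (connected_iff_exists_forall_reachable _).mpr ⟨0, fun a =>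
    reachable_of_edist_ne_top (ne_top_of_le_ne_top (by simp) (edist_le_eccent.trans hecc))⟩

theorem unhappy_G₀ {k : ℕ} (hk : 3 ≤ k) : UnhappySumVia G₀ k 0 2 1 ∧ UnhappyMaxVia G₀ k 0 2 1 :=
  unhappy_of_ballFinset (r := 2) swapGraph_G₀ hk (by decide) (by decide) (by decide) (by decide)
    (by decide) (by decide) (by decide)

theorem unhappy_G₁ {k : ℕ} (hk : 3 ≤ k) : UnhappySumVia G₁ k 1 0 2 ∧ UnhappyMaxVia G₁ k 1 0 2 :=
  unhappy_of_ballFinset (r := 2) swapGraph_G₁ hk (by decide) (by decide) (by decide) (by decide)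
    (by decide) (by decide) (by decide)

theorem unhappy_G₂ {k : ℕ} (hk : 3 ≤ k) : UnhappySumVia G₂ k 2 1 0 ∧ UnhappyMaxVia G₂ k 2 1 0 :=
  unhappy_of_ballFinset (r := 2) swapGraph_G₂ hk (by decide) (by decide) (by decide) (by decide)
    (by decide) (by decide) (by decide)

def bestResponseCycle (t : ℕ) : SimpleGraph (Fin 12) :=
  match t % 3 with
  | 0 => G₀
  | 1 => G₁
  | _ => G₂

theorem bestResponseCycle_step {k : ℕ} (hk : 3 ≤ k) {t : ℕ} (ht : t < 3) :
    ∃ u v w, (UnhappySumVia (bestResponseCycle t) k u v w ∧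
      UnhappyMaxVia (bestResponseCycle t) k u v w) ∧
      bestResponseCycle (t + 1) = swapGraph (bestResponseCycle t) u v w := by
  interval_cases t
  exacts [⟨0, 2, 1, unhappy_G₀ hk, swapGraph_G₀.symm⟩,
    ⟨1, 0, 2, unhappy_G₁ hk, swapGraph_G₁.symm⟩, ⟨2, 1, 0, unhappy_G₂ hk, swapGraph_G₂.symm⟩]

theorem stmt2 (k : ℕ) (hk : 3 ≤ k) :
    (∃ (n T : ℕ) (Gs : ℕ → SimpleGraph (Fin n)),
      1 ≤ T ∧ (Gs 0).Connected ∧ Gs T = Gs 0 ∧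
      ∀ t < T, ∃ u v w, UnhappySumVia (Gs t) k u v w ∧
        Gs (t + 1) = swapGraph (Gs t) u v w) ∧
    (∃ (n T : ℕ) (Gs : ℕ → SimpleGraph (Fin n)),
      1 ≤ T ∧ (Gs 0).Connected ∧ Gs T = Gs 0 ∧
      ∀ t < T, ∃ u v w, UnhappyMaxVia (Gs t) k u v w ∧
        Gs (t + 1) = swapGraph (Gs t) u v w) := by
  refine ⟨⟨12, 3, bestResponseCycle, by norm_num, connected_G₀, rfl, fun t ht => ?_⟩,
    ⟨12, 3, bestResponseCycle, by norm_num, connected_G₀, rfl, fun t ht => ?_⟩⟩ <;>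
  obtain ⟨u, v, w, hunhappy, hswap⟩ := bestResponseCycle_step hk ht
  exacts [⟨u, v, w, hunhappy.1, hswap⟩, ⟨u, v, w, hunhappy.2, hswap⟩]

end SwapGame
end

section
/- Let k ≥ 1 and let G be a tree on n vertices. (a) If a player u is unhappy in G with respect to the SUM-cost (pessimistic, k-local information) via an edge swap (v, w) and performs this swap, then the resulting graph G' is a tree on n vertices and SC_SUM(G) − SC_SUM(G') ≥ 2. (b) Consequently, every sequence G_0, G_1, …, G_T in which G_0 is an n-vertex tree and each G_{t+1} is obtained from G_t by an edge swap performed by a player pessimistically unhappy with respect to the SUM-cost via that swap satisfies T ≤ n³; in particular the SUM swap game by pessimistic players with k-local information starting from a tree has the finite improvement property and reaches a sum-swap equilibrium within n³ edge swaps. -/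
/-!
Deleting the edge `uv` splits the tree `G` into the side `A` of `u` and the side `B` of `v`.
Pessimism applied to the compatible graph `G` itself says that `u`'s cost drops, so the new graph
`G'` is connected; hence `w ∈ B` and `G' = (G - uv) + uw` is again a tree. Distances inside `A` and
inside `B` do not change, and for `x ∈ A`, `y ∈ B` the distance changes by exactly
`d_G(u, y) - d_G'(u, y)`. Summing, `SC(G) - SC(G') = 2 |A| (c_u(G) - c_u(G')) ≥ 2`, and since the
social cost of an `n`-vertex graph is at most `n³`, an improving sequence has at most `n³` steps.
-/

open SimpleGraph

open Finset

namespace SimpleGraph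

variable {V : Type*} {G D : SimpleGraph V} {p q x y : V}

lemma le_add_edist_of_forall_adj {f : V → ℕ∞} (hf : ∀ a b, G.Adj a b → f a ≤ f b + 1)
    (x y : V) : f x ≤ f y + G.edist x y := by
  have key : ∀ {a b} (W : G.Walk a b), f a ≤ f b + W.length := by
    intro a b W
    induction W with
    | nil => simp
    | @cons a c b h W ih =>
      calc f a ≤ f c + 1 := hf _ _ h
        _ ≤ f b + W.length + 1 := by gcongr
        _ = _ := by rw [Walk.length_cons]; push_cast; ring
  by_cases hr : G.Reachable x y
  · obtain ⟨W, hW⟩ := hr.exists_walk_length_eq_edist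
    exact hW ▸ key W
  · simp [edist_eq_top_of_not_reachable hr]

lemma edist_sup_edge (D : SimpleGraph V) (p q x y : V) :
    (D ⊔ edge p q).edist x y =
      min (D.edist x y) (min (D.edist x p + 1 + D.edist q y) (D.edist x q + 1 + D.edist p y)) := by
  set H := D ⊔ edge p q
  have hDH {a b : V} : H.edist a b ≤ D.edist a b := edist_anti le_sup_left
  have hpq : H.edist p q ≤ 1 := by
    rcases eq_or_ne p q with rfl | hne
    · simp
    · exact edist_le_one_iff_adj_or_eq.2 (.inl (by simp [H, edge_adj, hne]))
  have hvia {a b c d : V} : H.edist a d ≤ H.edist a b + H.edist b c + H.edist c d :=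
    H.edist_triangle.trans (add_le_add_left H.edist_triangle _)
  refine le_antisymm (le_min hDH (le_min ?_ ?_)) ?_
  · exact hvia.trans (add_le_add (add_le_add hDH hpq) hDH)
  · exact hvia.trans (add_le_add (add_le_add hDH (edist_comm.trans_le hpq)) hDH)
  -- As a function of `x`, the right-hand side vanishes at `y` and is 1-Lipschitz along edges.
  · set f : V → ℕ∞ := fun a =>
      min (D.edist a y) (min (D.edist a p + 1 + D.edist q y) (D.edist a q + 1 + D.edist p y))
    have hD {a b : V} (h : D.Adj a b) (z : V) : D.edist a z ≤ D.edist b z + 1 := by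
      calc D.edist a z ≤ D.edist a b + D.edist b z := D.edist_triangle
        _ = _ := by rw [add_comm, edist_eq_one_iff_adj.2 h]
    have hf : ∀ a b, H.Adj a b → f a ≤ f b + 1 := by
      intro a b hab
      rw [sup_adj, edge_adj] at hab
      rcases hab with hab | ⟨(⟨rfl, rfl⟩ | ⟨rfl, rfl⟩), -⟩
      · have hD' (z : V) (c : ℕ∞) : D.edist a z + 1 + c ≤ D.edist b z + 1 + c + 1 :=
          calc D.edist a z + 1 + c ≤ D.edist b z + 1 + 1 + c := by grw [hD hab z]
            _ = D.edist b z + 1 + c + 1 := by ring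
        simp only [f, ← min_add_add_right]
        exact min_le_min (hD hab y) (min_le_min (hD' p _) (hD' q _))
      · simp only [f, ← min_add_add_right, edist_self, zero_add, le_min_iff, min_le_iff]
        refine ⟨.inr (.inl ?_), .inr (.inl ?_), .inl ?_⟩
        all_goals simp only [add_comm, add_left_comm]
        all_goals
          first | rfl | exact le_add_left le_add_self | gcongr; exact le_add_left le_self_add
      · simp only [f, ← min_add_add_right, edist_self, zero_add, le_min_iff, min_le_iff]
        refine ⟨.inr (.inr ?_), .inl ?_, .inr (.inr ?_)⟩
        all_goals simp only [add_comm, add_left_comm]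
        all_goals
          first | rfl | exact le_add_left le_add_self | gcongr; exact le_add_left le_self_add
    simpa [f] using le_add_edist_of_forall_adj hf x y

lemma edist_sup_edge_of_reachable (hpq : ¬D.Reachable p q) (hx : D.Reachable p x)
    (hy : D.Reachable p y) : (D ⊔ edge p q).edist x y = D.edist x y := by
  have hqy : D.edist q y = ⊤ := edist_eq_top_of_not_reachable fun h => hpq (hy.trans h.symm)
  have hxq : D.edist x q = ⊤ := edist_eq_top_of_not_reachable fun h => hpq (hx.trans h)
  simp [edist_sup_edge, hqy, hxq]

lemma edist_sup_edge_of_not_reachable (hx : ¬D.Reachable p x) (hy : ¬D.Reachable p y) :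
    (D ⊔ edge p q).edist x y = D.edist x y := by
  have hxp : D.edist x p = ⊤ := edist_eq_top_of_not_reachable fun h => hx h.symm
  simp [edist_sup_edge, hxp, edist_eq_top_of_not_reachable hy]

lemma edist_sup_edge_of_reachable_of_not_reachable (hx : D.Reachable p x)
    (hy : ¬D.Reachable p y) :
    (D ⊔ edge p q).edist x y = D.edist x p + 1 + D.edist q y := by
  have hxy : D.edist x y = ⊤ := edist_eq_top_of_not_reachable fun h => hy (hx.trans h)
  simp [edist_sup_edge, hxy, edist_eq_top_of_not_reachable hy]

lemma reachable_of_reachable_sup_edge (hx : D.Reachable p x) (hy : ¬D.Reachable p y)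
    (h : (D ⊔ edge p q).Reachable x y) : D.Reachable q y := by
  rw [← edist_ne_top_iff_reachable, edist_sup_edge_of_reachable_of_not_reachable hx hy] at h
  exact edist_ne_top_iff_reachable.1 fun h' => h (by simp [h'])

lemma deleteEdges_sup_edge_of_adj {u v : V} (h : G.Adj u v) :
    G.deleteEdges {s(u, v)} ⊔ edge u v = G := by
  ext a b
  simp only [sup_adj, deleteEdges_adj, edge_adj, Set.mem_singleton_iff, Sym2.eq_iff]
  constructor
  · rintro (⟨hab, -⟩ | ⟨⟨rfl, rfl⟩ | ⟨rfl, rfl⟩, -⟩)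
    exacts [hab, h, h.symm]
  · intro hab
    by_cases he : a = u ∧ b = v ∨ a = v ∧ b = u
    · exact .inr ⟨he, hab.ne⟩
    · exact .inl ⟨hab, he⟩

section Fintype

variable [Fintype V] {q₁ q₂ : V}

lemma Connected.sum_edist_eq_coe (hG : G.Connected) (u : V) :
    ∑ v, G.edist u v = ((∑ v, G.dist u v : ℕ) : ℕ∞) := by
  push_cast
  exact sum_congr rfl fun v _ => (hG.preconnected u v).coe_dist_eq_edist.symm

lemma dist_lt_card (G : SimpleGraph V) (u v : V) : G.dist u v < Fintype.card V := by
  by_cases hr : G.Reachable u v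
  · obtain ⟨W, hW, hlen⟩ := hr.exists_path_of_dist
    exact hlen ▸ hW.length_lt
  · rw [dist_eq_zero_of_not_reachable hr]
    exact Fintype.card_pos_iff.2 ⟨u⟩

open Classical in
lemma edist_sup_edge_add_ite (h₁ : ¬D.Reachable p q₁) (h₂ : ¬D.Reachable p q₂) (x y : V) :
    (D ⊔ edge p q₁).edist x y +
        ((if D.Reachable p x then (D ⊔ edge p q₂).edist p y else 0) +
          if D.Reachable p y then (D ⊔ edge p q₂).edist p x else 0) =
      (D ⊔ edge p q₂).edist x y +
        ((if D.Reachable p x then (D ⊔ edge p q₁).edist p y else 0) +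
          if D.Reachable p y then (D ⊔ edge p q₁).edist p x else 0) := by
  have hp : D.Reachable p p := .rfl
  by_cases hx : D.Reachable p x <;> by_cases hy : D.Reachable p y
  · simp [hx, hy, edist_sup_edge_of_reachable, h₁, h₂]
  · simp only [hx, hy, if_true, if_false, add_zero,
      edist_sup_edge_of_reachable_of_not_reachable hx hy,
      edist_sup_edge_of_reachable_of_not_reachable hp hy, edist_self]
    ring
  · rw [edist_comm (G := D ⊔ edge p q₁) (u := x), edist_comm (G := D ⊔ edge p q₂) (u := x)]
    simp only [hx, hy, if_true, if_false, zero_add,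
      edist_sup_edge_of_reachable_of_not_reachable hy hx,
      edist_sup_edge_of_reachable_of_not_reachable hp hx, edist_self]
    ring
  · simp [hx, hy, edist_sup_edge_of_not_reachable]

lemma sum_sum_add_ite (P : V → Prop) [DecidablePred P] (e : V → V → ℕ∞) (c : V → ℕ∞) :
    ∑ x, ∑ y, (e x y + ((if P x then c y else 0) + if P y then c x else 0)) =
      ∑ x, ∑ y, e x y + 2 * #{x | P x} * ∑ y, c y := by
  have h₁ : ∑ x, ∑ y, (if P x then c y else 0) = #{x | P x} * ∑ y, c y := by
    simp_rw [sum_ite_irrel, sum_const_zero, ← sum_filter, sum_const, nsmul_eq_mul]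
  have h₂ : ∑ x, ∑ y, (if P y then c x else 0) = #{x | P x} * ∑ y, c y := by
    simp_rw [← sum_filter, sum_const, nsmul_eq_mul, mul_sum]
  simp only [sum_add_distrib, h₁, h₂]
  ring

open Classical in
lemma sum_sum_edist_sup_edge_add (h₁ : ¬D.Reachable p q₁) (h₂ : ¬D.Reachable p q₂) :
    ∑ x, ∑ y, (D ⊔ edge p q₁).edist x y +
        2 * #{x | D.Reachable p x} * ∑ y, (D ⊔ edge p q₂).edist p y =
      ∑ x, ∑ y, (D ⊔ edge p q₂).edist x y +
        2 * #{x | D.Reachable p x} * ∑ y, (D ⊔ edge p q₁).edist p y := by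
  rw [← sum_sum_add_ite, ← sum_sum_add_ite]
  exact sum_congr rfl fun x _ => sum_congr rfl fun y _ =>
    edist_sup_edge_add_ite h₁ h₂ x y

end Fintype

end SimpleGraph

namespace SwapGame

variable {V : Type} {G D : SimpleGraph V} {k : ℕ} {u v w : V}

lemma swapGraph_eq_deleteEdges_sup_edge (G : SimpleGraph V) (u v w : V) :
    swapGraph G u v w = G.deleteEdges {s(u, v)} ⊔ edge u w := by
  ext a b
  have := G.ne_of_adj (a := a) (b := b)
  simp only [swapGraph, fromEdgeSet_adj, Set.mem_union, Set.mem_sdiff, Set.mem_singleton_iff,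
    mem_edgeSet, sup_adj, deleteEdges_adj, edge_adj, Sym2.eq_iff]
  tauto

lemma compatible_self [Finite V] (hG : G.Connected) (k : ℕ) (u : V) : Compatible G k u G id :=
  ⟨inferInstance, hG, Set.injOn_id _, by rw [Set.image_id]; rfl, fun _ _ _ _ => Iff.rfl⟩

lemma UnhappySumVia.cSum_swapGraph_lt [Finite V] (hG : G.Connected)
    (h : UnhappySumVia G k u v w) : cSum (swapGraph G u v w) u < cSum G u :=
  h.2 V G id (compatible_self hG k u)

section Fintype

variable [Fintype V]

lemma cSum_eq_sum_edist (G : SimpleGraph V) (u : V) : cSum G u = ∑ v, G.edist u v :=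
  tsum_fintype _

lemma coe_scSum_of_connected (hG : G.Connected) : (scSum G : ℕ∞) = ∑ u, ∑ v, G.edist u v := by
  simp only [scSum, Nat.cast_sum, hG.sum_edist_eq_coe]

lemma connected_of_cSum_ne_top (h : cSum G u ≠ ⊤) : G.Connected := by
  rw [cSum_eq_sum_edist, ENat.sum_ne_top] at h
  exact (connected_iff_exists_forall_reachable _).2
    ⟨u, fun v => edist_ne_top_iff_reachable.1 (h v (mem_univ v))⟩

lemma scSum_le_card_pow_three (G : SimpleGraph V) : scSum G ≤ Fintype.card V ^ 3 :=
  calc scSum G ≤ ∑ _u : V, ∑ _v : V, Fintype.card V :=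
        sum_le_sum fun u _ => sum_le_sum fun v _ => (G.dist_lt_card u v).le
    _ = Fintype.card V ^ 3 := by simp only [sum_const, card_univ, smul_eq_mul]; ring

lemma scSum_sup_edge_add_two_le {p q₁ q₂ : V} (hc₁ : (D ⊔ edge p q₁).Connected)
    (hc₂ : (D ⊔ edge p q₂).Connected) (h₁ : ¬D.Reachable p q₁) (h₂ : ¬D.Reachable p q₂)
    (hlt : cSum (D ⊔ edge p q₂) p < cSum (D ⊔ edge p q₁) p) :
    scSum (D ⊔ edge p q₂) + 2 ≤ scSum (D ⊔ edge p q₁) := by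
  classical
  have hid := sum_sum_edist_sup_edge_add h₁ h₂
  rw [cSum_eq_sum_edist, cSum_eq_sum_edist, hc₁.sum_edist_eq_coe, hc₂.sum_edist_eq_coe,
    Nat.cast_lt] at hlt
  rw [← coe_scSum_of_connected hc₁, ← coe_scSum_of_connected hc₂, hc₁.sum_edist_eq_coe,
    hc₂.sum_edist_eq_coe] at hid
  norm_cast at hid
  have hp : 0 < #{x | D.Reachable p x} := card_pos.2 ⟨p, by simp⟩
  nlinarith

theorem isTree_sup_edge_and_scSum_add_two_le (hD : D.IsAcyclic) (huv : ¬D.Reachable u v)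
    (hG : (D ⊔ edge u v).Connected) (hlt : cSum (D ⊔ edge u w) u < cSum (D ⊔ edge u v) u) :
    (D ⊔ edge u w).IsTree ∧ scSum (D ⊔ edge u w) + 2 ≤ scSum (D ⊔ edge u v) := by
  have hconn : (D ⊔ edge u w).Connected := connected_of_cSum_ne_top (ne_top_of_lt hlt)
  have hwv : D.Reachable w v := reachable_of_reachable_sup_edge .rfl huv (hconn.preconnected u v)
  have huw : ¬D.Reachable u w := fun h => huv (h.trans hwv)
  exact ⟨⟨hconn, hD.sup_edge_of_not_reachable huw⟩, scSum_sup_edge_add_two_le hG hconn huv huw hlt⟩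

theorem UnhappySumVia.isTree_swapGraph_and_scSum_add_two_le (hG : G.IsTree)
    (h : UnhappySumVia G k u v w) :
    (swapGraph G u v w).IsTree ∧ scSum (swapGraph G u v w) + 2 ≤ scSum G := by
  have hGD := deleteEdges_sup_edge_of_adj h.1.1
  have hlt := h.cSum_swapGraph_lt hG.connected
  rw [swapGraph_eq_deleteEdges_sup_edge] at hlt ⊢
  have key := isTree_sup_edge_and_scSum_add_two_le (u := u) (v := v) (w := w)
    (hG.isAcyclic.anti (deleteEdges_le _))
    (isAcyclic_iff_forall_adj_isBridge.1 hG.isAcyclic h.1.1) (by rw [hGD]; exact hG.connected)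
    (by rwa [hGD])
  rwa [hGD] at key

theorem isTree_and_scSum_add_two_mul_le {T : ℕ} (Gs : ℕ → SimpleGraph V) (h0 : (Gs 0).IsTree)
    (hstep : ∀ t < T, ∃ u v w, UnhappySumVia (Gs t) k u v w ∧
      Gs (t + 1) = swapGraph (Gs t) u v w) :
    ∀ t ≤ T, (Gs t).IsTree ∧ scSum (Gs t) + 2 * t ≤ scSum (Gs 0) := by
  intro t ht
  induction t with
  | zero => exact ⟨h0, by simp⟩
  | succ t ih =>
    obtain ⟨hT, hsc⟩ := ih (by omega)
    obtain ⟨u, v, w, hu, hGs⟩ := hstep t (by omega)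
    obtain ⟨hT', hsc'⟩ := hu.isTree_swapGraph_and_scSum_add_two_le hT
    rw [hGs]
    exact ⟨hT', by omega⟩

end Fintype

theorem stmt3_general (k : ℕ) (n : ℕ) :
    (∀ (V : Type) [Fintype V], ∀ (G : SimpleGraph V), Fintype.card V = n → G.IsTree →
      ∀ u v w : V, UnhappySumVia G k u v w →
        (swapGraph G u v w).IsTree ∧ scSum (swapGraph G u v w) + 2 ≤ scSum G) ∧
    (∀ (T : ℕ) (Gs : ℕ → SimpleGraph (Fin n)), (Gs 0).IsTree →
      (∀ t < T, ∃ u v w, UnhappySumVia (Gs t) k u v w ∧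
        Gs (t + 1) = swapGraph (Gs t) u v w) →
      T ≤ n ^ 3) := by
  refine ⟨fun V _ G _ hG u v w h => h.isTree_swapGraph_and_scSum_add_two_le hG,
    fun T Gs h0 hstep => ?_⟩
  have hsc := (isTree_and_scSum_add_two_mul_le Gs h0 hstep T le_rfl).2
  have hn := scSum_le_card_pow_three (Gs 0)
  rw [Fintype.card_fin] at hn
  omega

theorem stmt3 (k : ℕ) (hk : 1 ≤ k) (n : ℕ) :
    (∀ (V : Type) [Fintype V], ∀ (G : SimpleGraph V), Fintype.card V = n → G.IsTree →
      ∀ u v w : V, UnhappySumVia G k u v w →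
        (swapGraph G u v w).IsTree ∧ scSum (swapGraph G u v w) + 2 ≤ scSum G) ∧
    (∀ (T : ℕ) (Gs : ℕ → SimpleGraph (Fin n)), (Gs 0).IsTree →
      (∀ t < T, ∃ u v w, UnhappySumVia (Gs t) k u v w ∧
        Gs (t + 1) = swapGraph (Gs t) u v w) →
      T ≤ n ^ 3) :=
  stmt3_general k n

end SwapGame
end

section
/- Let G be a tree, let u be a vertex, let v ∈ N_G(u), and let G^u and G^v denote the connected components containing u and v, respectively, of the graph obtained from G by deleting the edge {u, v}. Let w be a vertex of G^v with w ∉ N_G(u) ∪ {u}, and let G' be the tree obtained from G by removing the edge {u, v} and adding the edge {u, w}. If c^MAX_u(G') < c^MAX_u(G), then every vertex y of G^v satisfies at least one of the following two conditions: (i) there exists a vertex x of G^u with c^MAX_x(G) > c^MAX_y(G'); (ii) c^MAX_y(G) ≥ c^MAX_y(G'). -/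
open SimpleGraph

namespace SwapGame

section Aux

variable {V : Type}

private lemma walk_bound {D : SimpleGraph V} {p q : V} (hpq : ¬ D.Reachable p q)
    {x y : V}
    (W : (SimpleGraph.fromEdgeSet (D.edgeSet ∪ {s(p, q)})).Walk x y) :
    (D.Reachable p x → D.Reachable p y → D.edist x y ≤ W.length) ∧
    (D.Reachable p x → D.Reachable q y → D.edist x p + 1 + D.edist q y ≤ W.length) ∧
    (D.Reachable q x → D.Reachable p y → D.edist x q + 1 + D.edist p y ≤ W.length) ∧
    (D.Reachable q x → D.Reachable q y → D.edist x y ≤ W.length) := by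
  induction W with
  | nil =>
    refine ⟨?_, ?_, ?_, ?_⟩ <;> intro h1 h2
    · simp [SimpleGraph.edist_self]
    · exact absurd (h1.trans h2.symm) hpq
    · exact absurd (h2.trans h1.symm) hpq
    · simp [SimpleGraph.edist_self]
  | @cons a b c h W ih =>
    obtain ⟨hmem, hne⟩ := (SimpleGraph.fromEdgeSet_adj _).mp h
    have hlen : (((SimpleGraph.Walk.cons h W).length : ℕ) : ℕ∞)
        = (W.length : ℕ∞) + 1 := by
      simp [SimpleGraph.Walk.length_cons]
    rcases hmem with hD | hpq'
    · have hD' : D.Adj a b := (SimpleGraph.mem_edgeSet D).mp hD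
      have hab : D.edist a b = 1 := SimpleGraph.edist_eq_one_iff_adj.mpr hD'
      refine ⟨?_, ?_, ?_, ?_⟩ <;> intro h1 h2 <;> rw [hlen]
      · have hb := h1.trans hD'.reachable
        calc D.edist a c ≤ D.edist a b + D.edist b c := SimpleGraph.edist_triangle
          _ ≤ 1 + (W.length : ℕ∞) := add_le_add hab.le (ih.1 hb h2)
          _ = (W.length : ℕ∞) + 1 := add_comm _ _
      · have hb := h1.trans hD'.reachable
        calc D.edist a p + 1 + D.edist q c
            ≤ (D.edist a b + D.edist b p) + 1 + D.edist q c := by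
              gcongr
              exact SimpleGraph.edist_triangle
          _ = D.edist a b + (D.edist b p + 1 + D.edist q c) := by ring
          _ ≤ 1 + (W.length : ℕ∞) := add_le_add hab.le (ih.2.1 hb h2)
          _ = (W.length : ℕ∞) + 1 := add_comm _ _
      · have hb := h1.trans hD'.reachable
        calc D.edist a q + 1 + D.edist p c
            ≤ (D.edist a b + D.edist b q) + 1 + D.edist p c := by
              gcongr
              exact SimpleGraph.edist_triangle
          _ = D.edist a b + (D.edist b q + 1 + D.edist p c) := by ring
          _ ≤ 1 + (W.length : ℕ∞) := add_le_add hab.le (ih.2.2.1 hb h2)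
          _ = (W.length : ℕ∞) + 1 := add_comm _ _
      · have hb := h1.trans hD'.reachable
        calc D.edist a c ≤ D.edist a b + D.edist b c := SimpleGraph.edist_triangle
          _ ≤ 1 + (W.length : ℕ∞) := add_le_add hab.le (ih.2.2.2 hb h2)
          _ = (W.length : ℕ∞) + 1 := add_comm _ _
    · rw [Set.mem_singleton_iff, Sym2.eq_iff] at hpq'
      rcases hpq' with ⟨rfl, rfl⟩ | ⟨rfl, rfl⟩
      · refine ⟨?_, ?_, ?_, ?_⟩ <;> intro h1 h2 <;> rw [hlen]
        · have h3 := ih.2.2.1 (SimpleGraph.Reachable.refl b) h2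
          rw [SimpleGraph.edist_self, zero_add] at h3
          calc D.edist a c ≤ 1 + D.edist a c := le_add_self
            _ ≤ (W.length : ℕ∞) := h3
            _ ≤ (W.length : ℕ∞) + 1 := le_self_add
        · rw [SimpleGraph.edist_self, zero_add]
          calc (1 : ℕ∞) + D.edist b c
              ≤ 1 + (W.length : ℕ∞) :=
                add_le_add le_rfl (ih.2.2.2 (SimpleGraph.Reachable.refl b) h2)
            _ = (W.length : ℕ∞) + 1 := add_comm _ _
        · exact absurd h1.symm hpq
        · exact absurd h1.symm hpq
      · refine ⟨?_, ?_, ?_, ?_⟩ <;> intro h1 h2 <;> rw [hlen]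
        · exact absurd h1 hpq
        · exact absurd h1 hpq
        · rw [SimpleGraph.edist_self, zero_add]
          calc (1 : ℕ∞) + D.edist b c
              ≤ 1 + (W.length : ℕ∞) :=
                add_le_add le_rfl (ih.1 (SimpleGraph.Reachable.refl b) h2)
            _ = (W.length : ℕ∞) + 1 := add_comm _ _
        · have h3 := ih.2.1 (SimpleGraph.Reachable.refl b) h2
          rw [SimpleGraph.edist_self, zero_add] at h3
          calc D.edist a c ≤ 1 + D.edist a c := le_add_self
            _ ≤ (W.length : ℕ∞) := h3
            _ ≤ (W.length : ℕ∞) + 1 := le_self_add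

private lemma le_from_walks {D : SimpleGraph V} {S : Set (Sym2 V)} {x y : V} {m : ℕ∞}
    (hm : ∀ W : (SimpleGraph.fromEdgeSet (D.edgeSet ∪ S)).Walk x y, m ≤ W.length) :
    m ≤ (SimpleGraph.fromEdgeSet (D.edgeSet ∪ S)).edist x y := by
  rw [SimpleGraph.edist_eq_sInf]
  exact le_sInf (by rintro _ ⟨W, rfl⟩; exact hm W)

private lemma D_le_fromEdgeSet (D : SimpleGraph V) (S : Set (Sym2 V)) :
    D ≤ SimpleGraph.fromEdgeSet (D.edgeSet ∪ S) := by
  conv_lhs => rw [← SimpleGraph.fromEdgeSet_edgeSet D]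
  exact SimpleGraph.fromEdgeSet_mono Set.subset_union_left

private lemma edist_same {D : SimpleGraph V} {p q : V} (hpq : ¬ D.Reachable p q)
    {x y : V} (hx : D.Reachable p x) (hy : D.Reachable p y) :
    (SimpleGraph.fromEdgeSet (D.edgeSet ∪ {s(p, q)})).edist x y = D.edist x y := by
  refine le_antisymm (SimpleGraph.edist_anti (D_le_fromEdgeSet D _)) ?_
  exact le_from_walks fun W => (walk_bound hpq W).1 hx hy

private lemma edist_cross {D : SimpleGraph V} {p q : V} (hpq : ¬ D.Reachable p q)
    {x y : V} (hx : D.Reachable p x) (hy : D.Reachable q y) :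
    (SimpleGraph.fromEdgeSet (D.edgeSet ∪ {s(p, q)})).edist x y
      = D.edist x p + 1 + D.edist q y := by
  have hne : p ≠ q := fun h => hpq (h ▸ SimpleGraph.Reachable.refl p)
  have hadj : (SimpleGraph.fromEdgeSet (D.edgeSet ∪ {s(p, q)})).Adj p q :=
    (SimpleGraph.fromEdgeSet_adj _).mpr ⟨Or.inr rfl, hne⟩
  have hle := D_le_fromEdgeSet D ({s(p, q)} : Set (Sym2 V))
  refine le_antisymm ?_ (le_from_walks fun W => (walk_bound hpq W).2.1 hx hy)
  calc (SimpleGraph.fromEdgeSet (D.edgeSet ∪ {s(p, q)})).edist x y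
      ≤ (SimpleGraph.fromEdgeSet (D.edgeSet ∪ {s(p, q)})).edist x p
        + ((SimpleGraph.fromEdgeSet (D.edgeSet ∪ {s(p, q)})).edist p q
          + (SimpleGraph.fromEdgeSet (D.edgeSet ∪ {s(p, q)})).edist q y) := by
        refine le_trans (SimpleGraph.edist_triangle (v := p)) ?_
        exact add_le_add le_rfl (SimpleGraph.edist_triangle (v := q))
    _ ≤ D.edist x p + (1 + D.edist q y) := by
        refine add_le_add (SimpleGraph.edist_anti hle) (add_le_add ?_ (SimpleGraph.edist_anti hle))
        exact le_of_eq (SimpleGraph.edist_eq_one_iff_adj.mpr hadj)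
    _ = D.edist x p + 1 + D.edist q y := (add_assoc _ _ _).symm

end Aux

theorem stmt4 {V : Type} [Fintype V] (G : SimpleGraph V) (hG : G.IsTree)
    (u v w : V) (huv : G.Adj u v)
    (hw : (G.deleteEdges {s(u, v)}).Reachable v w)
    (hwna : ¬ G.Adj u w) (hwu : w ≠ u)
    (h : cMax (swapGraph G u v w) u < cMax G u) :
    ∀ y : V, (G.deleteEdges {s(u, v)}).Reachable v y →
      (∃ x : V, (G.deleteEdges {s(u, v)}).Reachable u x ∧
          cMax (swapGraph G u v w) y < cMax G x) ∨
        cMax (swapGraph G u v w) y ≤ cMax G y := by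
  classical
  intro y hy
  simp only [cMax] at h ⊢
  set D := G.deleteEdges {s(u, v)} with hD
  have hconn : G.Connected := hG.1
  have hbr : ¬ D.Reachable u v := by
    have hbridge := (SimpleGraph.isAcyclic_iff_forall_adj_isBridge.mp hG.2) huv
    rw [SimpleGraph.isBridge_iff] at hbridge
    exact hbridge
  have hbrw : ¬ D.Reachable u w := fun hr => hbr (hr.trans hw.symm)
  have hbr' : ¬ D.Reachable v u := fun h' => hbr h'.symm
  have hbrw' : ¬ D.Reachable w u := fun h' => hbrw h'.symm
  have hGeq : G = SimpleGraph.fromEdgeSet (D.edgeSet ∪ {s(u, v)}) := by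
    rw [hD, SimpleGraph.edgeSet_deleteEdges, Set.diff_union_self,
      Set.union_eq_self_of_subset_right
        (Set.singleton_subset_iff.mpr ((SimpleGraph.mem_edgeSet G).mpr huv)),
      SimpleGraph.fromEdgeSet_edgeSet]
  have hG'eq : swapGraph G u v w = SimpleGraph.fromEdgeSet (D.edgeSet ∪ {s(u, w)}) := by
    simp only [swapGraph, hD, SimpleGraph.edgeSet_deleteEdges]
  have dG_same_u : ∀ {x t : V}, D.Reachable u x → D.Reachable u t →
      G.edist x t = D.edist x t := by
    intro x t hx ht; rw [hGeq]; exact edist_same hbr hx ht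
  have dG_same_v : ∀ {x t : V}, D.Reachable v x → D.Reachable v t →
      G.edist x t = D.edist x t := by
    intro x t hx ht; rw [hGeq, Sym2.eq_swap (a := u)]; exact edist_same hbr' hx ht
  have dG_cross : ∀ {x t : V}, D.Reachable u x → D.Reachable v t →
      G.edist x t = D.edist x u + 1 + D.edist v t := by
    intro x t hx ht; rw [hGeq]; exact edist_cross hbr hx ht
  have dG'_same_u : ∀ {x t : V}, D.Reachable u x → D.Reachable u t →
      (swapGraph G u v w).edist x t = D.edist x t := by
    intro x t hx ht; rw [hG'eq]; exact edist_same hbrw hx ht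
  have dG'_same_w : ∀ {x t : V}, D.Reachable w x → D.Reachable w t →
      (swapGraph G u v w).edist x t = D.edist x t := by
    intro x t hx ht; rw [hG'eq, Sym2.eq_swap (a := u)]; exact edist_same hbrw' hx ht
  have dG'_cross : ∀ {x t : V}, D.Reachable u x → D.Reachable w t →
      (swapGraph G u v w).edist x t = D.edist x u + 1 + D.edist w t := by
    intro x t hx ht; rw [hG'eq]; exact edist_cross hbrw hx ht
  have hpart : ∀ t : V, D.Reachable u t ∨ D.Reachable v t := by
    suffices H : ∀ (a t : V), G.Walk a t → (D.Reachable u a ∨ D.Reachable v a) →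
        (D.Reachable u t ∨ D.Reachable v t) by
      intro t
      obtain ⟨W⟩ := hconn.preconnected u t
      exact H u t W (Or.inl (SimpleGraph.Reachable.refl u))
    intro a t W
    induction W with
    | nil => exact id
    | @cons a b c hab W ih =>
      intro ha
      apply ih
      rcases eq_or_ne s(a, b) s(u, v) with he | he
      · rw [Sym2.eq_iff] at he
        rcases he with ⟨rfl, rfl⟩ | ⟨rfl, rfl⟩
        · exact Or.inr (SimpleGraph.Reachable.refl _)
        · exact Or.inl (SimpleGraph.Reachable.refl _)
      · have hDab : D.Adj a b := by
          rw [hD]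
          exact SimpleGraph.deleteEdges_adj.mpr ⟨hab, by simpa using he⟩
        rcases ha with h' | h'
        · exact Or.inl (h'.trans hDab.reachable)
        · exact Or.inr (h'.trans hDab.reachable)
  have attain : ∀ (H : SimpleGraph V) (x : V),
      ∃ t : V, (⨆ s : V, H.edist x s) = H.edist x t ∧ ∀ s : V, H.edist x s ≤ H.edist x t := by
    intro H x
    obtain ⟨t, -, ht⟩ := Finset.exists_max_image Finset.univ (H.edist x) ⟨x, Finset.mem_univ x⟩
    exact ⟨t, le_antisymm (iSup_le fun s => ht s (Finset.mem_univ s)) (le_iSup _ t),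
      fun s => ht s (Finset.mem_univ s)⟩
  obtain ⟨a, haA, hamax⟩ : ∃ a : V, D.Reachable u a ∧
      ∀ t : V, D.Reachable u t → D.edist u t ≤ D.edist u a := by
    obtain ⟨a0, -, ha0⟩ := Finset.exists_max_image Finset.univ
      (fun t => if D.Reachable u t then D.edist u t else 0) ⟨u, Finset.mem_univ u⟩
    by_cases h0 : D.Reachable u a0
    · refine ⟨a0, h0, fun t ht => ?_⟩
      simpa [ht, h0] using ha0 t (Finset.mem_univ t)
    · refine ⟨u, SimpleGraph.Reachable.refl u, fun t ht => ?_⟩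
      have h1 := ha0 t (Finset.mem_univ t)
      simp [ht, h0] at h1
      simp [h1, SimpleGraph.edist_self]
  obtain ⟨t1, ht1, ht1max⟩ := attain G u
  have ht1B : D.Reachable v t1 := by
    rcases hpart t1 with hA1 | hB1
    · exfalso
      have hle : (⨆ t, G.edist u t) ≤ ⨆ t, (swapGraph G u v w).edist u t := by
        rw [ht1, dG_same_u (SimpleGraph.Reachable.refl u) hA1,
          ← dG'_same_u (SimpleGraph.Reachable.refl u) hA1]
        exact le_iSup (fun t => (swapGraph G u v w).edist u t) t1
      exact absurd h (not_lt.mpr hle)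
    · exact hB1
  have hEu : (⨆ t, G.edist u t) = 1 + D.edist v t1 := by
    rw [ht1, dG_cross (SimpleGraph.Reachable.refl u) ht1B, SimpleGraph.edist_self, zero_add]
  have hwlt : ∀ t : V, D.Reachable v t → D.edist w t < D.edist v t1 := by
    intro t ht
    have h1 : (1 : ℕ∞) + D.edist w t ≤ ⨆ s, (swapGraph G u v w).edist u s := by
      have h2 := dG'_cross (SimpleGraph.Reachable.refl u) (hw.symm.trans ht)
      rw [SimpleGraph.edist_self, zero_add] at h2
      rw [← h2]
      exact le_iSup (fun s => (swapGraph G u v w).edist u s) t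
    have h3 : (1 : ℕ∞) + D.edist w t < 1 + D.edist v t1 := by
      rw [← hEu]
      exact lt_of_le_of_lt h1 h
    exact (WithTop.add_lt_add_iff_left (by simp : (1 : ℕ∞) ≠ ⊤)).mp h3
  by_cases hle2 : (⨆ t, (swapGraph G u v w).edist y t) ≤ ⨆ t, G.edist y t
  · exact Or.inr hle2
  left
  obtain ⟨t3, ht3, ht3max⟩ := attain (swapGraph G u v w) y
  rcases hpart t3 with ht3A | ht3B
  swap
  · exfalso
    apply hle2
    rw [ht3, dG'_same_w (hw.symm.trans hy) (hw.symm.trans ht3B), ← dG_same_v hy ht3B]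
    exact le_iSup (fun t => G.edist y t) t3
  refine ⟨a, haA, ?_⟩
  have key1 : (⨆ t, (swapGraph G u v w).edist y t) = D.edist t3 u + 1 + D.edist w y := by
    rw [ht3, SimpleGraph.edist_comm, dG'_cross ht3A (hw.symm.trans hy)]
  have hfina : D.edist a u + 1 ≠ ⊤ := by
    rw [SimpleGraph.edist_comm]
    exact WithTop.add_ne_top.mpr
      ⟨SimpleGraph.edist_ne_top_iff_reachable.mpr haA, WithTop.one_ne_top⟩
  have hcm : D.edist t3 u ≤ D.edist a u := by
    rw [SimpleGraph.edist_comm, SimpleGraph.edist_comm (u := a)]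
    exact hamax t3 ht3A
  calc (⨆ t, (swapGraph G u v w).edist y t)
      = D.edist t3 u + 1 + D.edist w y := key1
    _ ≤ D.edist a u + 1 + D.edist w y := add_le_add (add_le_add hcm le_rfl) le_rfl
    _ < D.edist a u + 1 + D.edist v t1 := (WithTop.add_lt_add_iff_left hfina).mpr (hwlt y hy)
    _ = G.edist a t1 := (dG_cross haA ht1B).symm
    _ ≤ ⨆ t, G.edist a t := le_iSup _ t1

end SwapGame
end

section
/- Every tree G whose diameter is larger than two contains a path P = v a b w (on four consecutive vertices) such that (i) the number of vertices of T_{G,P}(a) within distance 2 of a is at most the number of vertices of T_{G,P}(b) within distance 2 of b, and (ii) the depth of T_{G,P}(a) is at most two. -/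
open SimpleGraph

namespace SwapGame

section TreeHelpers

open SimpleGraph Walk

variable {V : Type} {G : SimpleGraph V}

private lemma edist_cast' {u v : V} (h : G.Reachable u v) :
    G.edist u v = (G.dist u v : ℕ∞) := by
  rw [SimpleGraph.dist]
  exact (ENat.coe_toNat (SimpleGraph.edist_ne_top_iff_reachable.mpr h)).symm

private lemma path_len (hG : G.IsTree) {u v : V} {p : G.Walk u v} (hp : p.IsPath) :
    p.length = G.dist u v := by
  obtain ⟨q, hq, hql⟩ := hG.isConnected.exists_path_of_dist u v
  have h2 := hG.IsAcyclic.path_unique ⟨p, hp⟩ ⟨q, hq⟩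
  rw [← hql]
  exact congrArg (fun r : G.Path u v => r.1.length) h2

private lemma path_edges_mem (hG : G.IsTree) {S : Set (Sym2 V)} {u v : V}
    (h : (G.deleteEdges S).Reachable u v) {p : G.Walk u v} (hp : p.IsPath) :
    ∀ e ∈ p.edges, e ∈ (G.deleteEdges S).edgeSet := by
  classical
  obtain ⟨w⟩ := h
  have hq : w.bypass.IsPath := w.bypass_isPath
  have hq' : (w.bypass.mapLe (G.deleteEdges_le S)).IsPath := hq.mapLe _
  have hpq : p = w.bypass.mapLe (G.deleteEdges_le S) :=
    congrArg Subtype.val (hG.IsAcyclic.path_unique ⟨p, hp⟩ ⟨_, hq'⟩)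
  intro e he
  rw [hpq] at he
  have he2 : e ∈ w.bypass.edges := by
    simpa [Walk.mapLe, Walk.edges_map, Sym2.map_id'] using he
  exact w.bypass.edges_subset_edgeSet he2

private lemma exists_transfer (hG : G.IsTree) {S : Set (Sym2 V)} {u v : V}
    (h : (G.deleteEdges S).Reachable u v) {p : G.Walk u v} (hp : p.IsPath) :
    ∃ q : (G.deleteEdges S).Walk u v, q.support = p.support ∧ q.length = p.length :=
  ⟨p.transfer _ (path_edges_mem hG h hp), p.support_transfer _, p.length_transfer _⟩

private lemma dist_transfer (hG : G.IsTree) {S : Set (Sym2 V)} {u v : V}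
    (h : (G.deleteEdges S).Reachable u v) :
    (G.deleteEdges S).dist u v = G.dist u v := by
  refine le_antisymm ?_ (SimpleGraph.Reachable.dist_anti (G.deleteEdges_le S) h)
  obtain ⟨p, hp, hpl⟩ := hG.isConnected.exists_path_of_dist u v
  obtain ⟨q, _, hql⟩ := exists_transfer hG h hp
  calc (G.deleteEdges S).dist u v ≤ q.length := SimpleGraph.dist_le q
  _ = G.dist u v := by rw [hql, hpl]

private lemma edist_transfer (hG : G.IsTree) {S : Set (Sym2 V)} {u v : V}
    (h : (G.deleteEdges S).Reachable u v) :
    (G.deleteEdges S).edist u v = (G.dist u v : ℕ∞) := by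
  rw [edist_cast' h, dist_transfer hG h]

private lemma reach_of_mem_support (hG : G.IsTree) {S : Set (Sym2 V)} {u v : V}
    (h : (G.deleteEdges S).Reachable u v) {p : G.Walk u v} (hp : p.IsPath) {m : V}
    (hm : m ∈ p.support) : (G.deleteEdges S).Reachable u m := by
  classical
  obtain ⟨q, hqs, _⟩ := exists_transfer hG h hp
  exact ⟨q.takeUntil m (hqs ▸ hm)⟩

private lemma not_reach_of_deleted (hG : G.IsTree) {S : Set (Sym2 V)} {u v : V}
    (huv : G.Adj u v) (hS : s(u, v) ∈ S) : ¬ (G.deleteEdges S).Reachable u v := by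
  intro h
  have hp : (Walk.cons huv Walk.nil).IsPath := by simp [huv.ne]
  have h2 := path_edges_mem hG h hp s(u, v) (by simp)
  rw [SimpleGraph.edgeSet_deleteEdges] at h2
  exact h2.2 hS

private lemma bridge_add (hG : G.IsTree) {y c : V} (hadj : G.Adj y c) {s t : V}
    (hs : (G.deleteEdges {s(y, c)}).Reachable y s)
    (ht : (G.deleteEdges {s(y, c)}).Reachable c t) :
    G.dist s t = G.dist s y + 1 + G.dist c t := by
  classical
  obtain ⟨p1, hp1, hl1⟩ := hG.isConnected.exists_path_of_dist s y
  obtain ⟨p2, hp2, hl2⟩ := hG.isConnected.exists_path_of_dist c t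
  have h1 : ∀ m ∈ p1.support, (G.deleteEdges {s(y, c)}).Reachable s m :=
    fun m hm => reach_of_mem_support hG hs.symm hp1 hm
  have h2 : ∀ m ∈ p2.support, (G.deleteEdges {s(y, c)}).Reachable c m :=
    fun m hm => reach_of_mem_support hG ht hp2 hm
  have hdisj : ∀ m, m ∈ p1.support → m ∈ p2.support → False := by
    intro m hm1 hm2
    exact not_reach_of_deleted hG hadj (Set.mem_singleton _)
      ((hs.trans (h1 m hm1)).trans (h2 m hm2).symm)
  have hWs : (p1.append (Walk.cons hadj p2)).support = p1.support ++ p2.support := by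
    rw [Walk.support_append, Walk.support_cons]
    rfl
  have hW : (p1.append (Walk.cons hadj p2)).IsPath := by
    rw [Walk.isPath_def, hWs]
    exact hp1.support_nodup.append hp2.support_nodup hdisj
  have hl := path_len hG hW
  rw [Walk.length_append, Walk.length_cons, hl1, hl2] at hl
  omega

private lemma walk_take_le (p : G.Walk u v) (i : ℕ) :
    ∃ w : G.Walk u (p.getVert i), w.length ≤ i := by
  induction p generalizing i with
  | nil => exact ⟨Walk.nil, by simp⟩
  | cons h q ih =>
    cases i with
    | zero => exact ⟨(Walk.nil).copy rfl (Walk.getVert_zero _).symm, by simp⟩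
    | succ n =>
      obtain ⟨w, hw⟩ := ih n
      exact ⟨(Walk.cons h w).copy rfl (Walk.getVert_cons_succ _ _).symm, by
        simpa using Nat.succ_le_succ hw⟩

private lemma walk_drop_le (p : G.Walk u v) (i : ℕ) :
    ∃ w : G.Walk (p.getVert i) v, w.length ≤ p.length - i := by
  induction p generalizing i with
  | nil => exact ⟨(Walk.nil).copy rfl rfl, by simp⟩
  | cons h q ih =>
    cases i with
    | zero =>
      exact ⟨(Walk.cons h q).copy (Walk.getVert_zero _).symm rfl, by simp⟩
    | succ n =>
      obtain ⟨w, hw⟩ := ih n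
      refine ⟨w.copy (Walk.getVert_cons_succ _ _).symm rfl, ?_⟩
      rw [Walk.length_copy, Walk.length_cons]
      omega

private lemma geodesic_getVert {b z : V} {p : G.Walk b z} (hpl : p.length = G.dist b z)
    {i : ℕ} (hi : i ≤ p.length) :
    G.dist b (p.getVert i) = i ∧ G.dist (p.getVert i) z = p.length - i := by
  obtain ⟨w1, hw1⟩ := walk_take_le p i
  obtain ⟨w2, hw2⟩ := walk_drop_le p i
  have h1 : G.dist b (p.getVert i) ≤ i := le_trans (SimpleGraph.dist_le w1) hw1
  have h2 : G.dist (p.getVert i) z ≤ p.length - i := le_trans (SimpleGraph.dist_le w2) hw2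
  obtain ⟨w2g, hw2g⟩ := (Reachable.exists_walk_length_eq_dist ⟨w2⟩ : ∃ q : G.Walk (p.getVert i) z, _)
  obtain ⟨w1g, hw1g⟩ := (Reachable.exists_walk_length_eq_dist ⟨w1⟩ : ∃ q : G.Walk b (p.getVert i), _)
  have h3 : G.dist b z ≤ w1.length + G.dist (p.getVert i) z := by
    calc G.dist b z ≤ (w1.append w2g).length := SimpleGraph.dist_le _
    _ = w1.length + w2g.length := Walk.length_append _ _
    _ = _ := by rw [hw2g]
  have h4 : G.dist b z ≤ G.dist b (p.getVert i) + w2.length := by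
    calc G.dist b z ≤ (w1g.append w2).length := SimpleGraph.dist_le _
    _ = w1g.length + w2.length := Walk.length_append _ _
    _ = _ := by rw [hw1g]
  omega

private lemma prefix_reach (hG : G.IsTree) {b z : V} {p : G.Walk b z} (hp : p.IsPath)
    {m m' : V} (hm : m ∈ p.support) (hadj : G.Adj m m')
    (hd : G.dist b m' = G.dist b m + 1) :
    (G.deleteEdges {s(m, m')}).Reachable b m := by
  classical
  have hqp : (p.takeUntil m hm).IsPath := hp.takeUntil hm
  have hlen : (p.takeUntil m hm).length = G.dist b m := path_len hG hqp
  have hedge : ∀ e ∈ (p.takeUntil m hm).edges, e ∈ (G.deleteEdges {s(m, m')}).edgeSet := by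
    intro e he
    rw [SimpleGraph.edgeSet_deleteEdges]
    refine ⟨(p.takeUntil m hm).edges_subset_edgeSet he, ?_⟩
    simp only [Set.mem_singleton_iff]
    rintro rfl
    have hm'2 : m' ∈ (p.takeUntil m hm).support :=
      (p.takeUntil m hm).snd_mem_support_of_mem_edges he
    have hq2 : ((p.takeUntil m hm).takeUntil m' hm'2).IsPath := hqp.takeUntil _
    have hlen2 : ((p.takeUntil m hm).takeUntil m' hm'2).length = G.dist b m' :=
      path_len hG hq2
    have hle := (p.takeUntil m hm).length_takeUntil_le hm'2
    omega
  exact ⟨(p.takeUntil m hm).transfer _ hedge⟩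

private lemma deleteEdges_mono' {S T : Set (Sym2 V)} (h : S ⊆ T) :
    G.deleteEdges T ≤ G.deleteEdges S := by
  intro x y hxy
  rw [SimpleGraph.deleteEdges_adj] at hxy ⊢
  exact ⟨hxy.1, fun hc => hxy.2 (h hc)⟩

end TreeHelpers
section MainProof

open SimpleGraph Walk

private lemma main_ind {V : Type} [Fintype V] {G : SimpleGraph V} (hG : G.IsTree) :
    ∀ (n : ℕ) (v a b w : V), G.Adj v a → G.Adj a b → G.Adj b w →
      v ≠ b → a ≠ w → v ≠ w →
      (∀ x : V, (G.deleteEdges {s(v, a), s(a, b), s(b, w)}).Reachable a x →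
        (G.deleteEdges {s(v, a), s(a, b), s(b, w)}).edist a x ≤ 2) →
      {x : V | (G.deleteEdges {s(v, a), s(a, b), s(b, w)}).Reachable b x}.ncard ≤ n →
      (∃ v a b w : V, G.Adj v a ∧ G.Adj a b ∧ G.Adj b w ∧
        v ≠ b ∧ a ≠ w ∧ v ≠ w ∧
        Set.ncard {x : V | (G.deleteEdges {s(v, a), s(a, b), s(b, w)}).edist a x ≤ 2} ≤
          Set.ncard {x : V | (G.deleteEdges {s(v, a), s(a, b), s(b, w)}).edist b x ≤ 2} ∧
        ∀ x : V, (G.deleteEdges {s(v, a), s(a, b), s(b, w)}).Reachable a x →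
          (G.deleteEdges {s(v, a), s(a, b), s(b, w)}).edist a x ≤ 2) := by
  intro n
  induction n with
  | zero =>
    intro v a b w _ _ _ _ _ _ _ hcard
    exfalso
    have hb : b ∈ {x : V | (G.deleteEdges {s(v, a), s(a, b), s(b, w)}).Reachable b x} :=
      Reachable.refl b
    have hpos := (Set.ncard_pos (Set.toFinite _)).mpr ⟨b, hb⟩
    omega
  | succ n ih =>
    intro v a b w hva hab hbw hvb haw hvw hsh hcard
    by_cases hmain :
        Set.ncard {x : V | (G.deleteEdges {s(v, a), s(a, b), s(b, w)}).edist a x ≤ 2} ≤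
        Set.ncard {x : V | (G.deleteEdges {s(v, a), s(a, b), s(b, w)}).edist b x ≤ 2}
    · exact ⟨v, a, b, w, hva, hab, hbw, hvb, haw, hvw, hmain, hsh⟩
    push_neg at hmain
    have hSsym : ({s(w, b), s(b, a), s(a, v)} : Set (Sym2 V)) =
        {s(v, a), s(a, b), s(b, w)} := by
      rw [Sym2.eq_swap (a := w) (b := b), Sym2.eq_swap (a := b) (b := a),
        Sym2.eq_swap (a := a) (b := v)]
      ext e
      simp only [Set.mem_insert_iff, Set.mem_singleton_iff]
      tauto
    by_cases hsh' : ∀ x : V, (G.deleteEdges {s(v, a), s(a, b), s(b, w)}).Reachable b x →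
        (G.deleteEdges {s(v, a), s(a, b), s(b, w)}).edist b x ≤ 2
    · refine ⟨w, b, a, v, hbw.symm, hab.symm, hva.symm, Ne.symm haw, Ne.symm hvb,
        Ne.symm hvw, ?_, ?_⟩
      · rw [hSsym]
        exact le_of_lt hmain
      · rw [hSsym]
        exact hsh'
    push_neg at hsh'
    obtain ⟨z0, hz0r, hz0⟩ := hsh'
    classical
    obtain ⟨z, hzmem, hzmax⟩ := Finset.exists_max_image
      (Finset.univ.filter fun x => (G.deleteEdges {s(v, a), s(a, b), s(b, w)}).Reachable b x)
      (fun x => G.dist b x) ⟨z0, by simp [hz0r]⟩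
    have hzr : (G.deleteEdges {s(v, a), s(a, b), s(b, w)}).Reachable b z := by
      simpa using hzmem
    have hzm : ∀ x : V, (G.deleteEdges {s(v, a), s(a, b), s(b, w)}).Reachable b x →
        G.dist b x ≤ G.dist b z := fun x hx => hzmax x (by simp [hx])
    have hz0d : 3 ≤ G.dist b z0 := by
      rw [edist_transfer hG hz0r] at hz0
      have h2 : (2 : ℕ) < G.dist b z0 := by exact_mod_cast hz0
      omega
    have hD3 : 3 ≤ G.dist b z := le_trans hz0d (hzm z0 hz0r)
    obtain ⟨k, hk⟩ : ∃ k, G.dist b z = k + 3 := ⟨G.dist b z - 3, by omega⟩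
    obtain ⟨p, hp, hpl⟩ := hG.isConnected.exists_path_of_dist b z
    have hplen : p.length = k + 3 := by rw [hpl, hk]
    have hgv : ∀ i ≤ p.length, G.dist b (p.getVert i) = i :=
      fun i hi => (geodesic_getVert hpl hi).1
    have hadj01 : G.Adj (p.getVert k) (p.getVert (k+1)) := p.adj_getVert_succ (by omega)
    have hadj12 : G.Adj (p.getVert (k+1)) (p.getVert (k+2)) := p.adj_getVert_succ (by omega)
    have hadj23 : G.Adj (p.getVert (k+2)) (p.getVert (k+3)) := p.adj_getVert_succ (by omega)
    have hmemsup : ∀ i ≤ p.length, p.getVert i ∈ p.support :=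
      fun i hi => Walk.mem_support_iff_exists_getVert.mpr ⟨i, rfl, hi⟩
    have hreachu : ∀ i ≤ p.length,
        (G.deleteEdges {s(v, a), s(a, b), s(b, w)}).Reachable b (p.getVert i) :=
      fun i hi => reach_of_mem_support hG hzr hp (hmemsup i hi)
    have hanr : ¬ (G.deleteEdges {s(v, a), s(a, b), s(b, w)}).Reachable b a := by
      intro h
      exact not_reach_of_deleted hG hab (by simp) h.symm
    have key : ∀ j, j + 1 ≤ p.length →
        ∀ x, (G.deleteEdges {s(p.getVert j, p.getVert (j+1))}).Reachable (p.getVert (j+1)) x →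
        (G.deleteEdges {s(v, a), s(a, b), s(b, w)}).Reachable (p.getVert (j+1)) x ∧
          G.dist b x = (j + 1) + G.dist (p.getVert (j+1)) x := by
      intro j hj x hx
      have hadjj : G.Adj (p.getVert j) (p.getVert (j+1)) := p.adj_getVert_succ (by omega)
      have hbm : (G.deleteEdges {s(p.getVert j, p.getVert (j+1))}).Reachable b (p.getVert j) :=
        prefix_reach hG hp (hmemsup j (by omega)) hadjj
          (by rw [hgv j (by omega), hgv (j+1) (by omega)])
      have hdistx : G.dist b x = (j + 1) + G.dist (p.getVert (j+1)) x := by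
        have hba := bridge_add hG hadjj hbm.symm hx
        rw [hgv j (by omega)] at hba
        omega
      obtain ⟨q, hq, hql⟩ := hG.isConnected.exists_path_of_dist (p.getVert (j+1)) x
      have hsupp : ∀ m ∈ q.support,
          (G.deleteEdges {s(p.getVert j, p.getVert (j+1))}).Reachable (p.getVert (j+1)) m :=
        fun m hm => reach_of_mem_support hG hx hq hm
      have hnb : b ∉ q.support := by
        intro hbs
        exact not_reach_of_deleted hG hadjj (Set.mem_singleton _)
          (hbm.symm.trans (hsupp b hbs).symm)
      have hanrc : a ≠ p.getVert (j+1) := by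
        intro h
        exact hanr (h ▸ hreachu (j+1) (by omega))
      have hbnec : b ≠ p.getVert (j+1) := by
        intro h
        have h1 := hgv (j+1) (by omega)
        rw [← h, SimpleGraph.dist_self] at h1
        omega
      have hedgeba : (G.deleteEdges {s(p.getVert j, p.getVert (j+1))}).Adj b a := by
        rw [SimpleGraph.deleteEdges_adj]
        refine ⟨hab.symm, ?_⟩
        simp only [Set.mem_singleton_iff, Sym2.eq_iff]
        rintro (⟨h1, h2⟩ | ⟨h1, h2⟩)
        · exact hanrc h2
        · exact hbnec h1
      have hna : a ∉ q.support := by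
        intro has
        exact not_reach_of_deleted hG hadjj (Set.mem_singleton _)
          (hbm.symm.trans (hedgeba.reachable.trans (hsupp a has).symm))
      have hqS : ∀ e ∈ q.edges, e ∈ (G.deleteEdges {s(v, a), s(a, b), s(b, w)}).edgeSet := by
        intro e he
        rw [SimpleGraph.edgeSet_deleteEdges]
        refine ⟨q.edges_subset_edgeSet he, ?_⟩
        intro heS
        simp only [Set.mem_insert_iff, Set.mem_singleton_iff] at heS
        rcases heS with h | h | h
        · rw [h] at he
          exact hna (q.snd_mem_support_of_mem_edges he)
        · rw [h] at he
          exact hna (q.fst_mem_support_of_mem_edges he)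
        · rw [h] at he
          exact hnb (q.fst_mem_support_of_mem_edges he)
      exact ⟨⟨q.transfer _ hqS⟩, hdistx⟩
    have hsh2 : ∀ x : V,
        (G.deleteEdges {s(p.getVert k, p.getVert (k+1)), s(p.getVert (k+1), p.getVert (k+2)),
          s(p.getVert (k+2), p.getVert (k+3))}).Reachable (p.getVert (k+1)) x →
        (G.deleteEdges {s(p.getVert k, p.getVert (k+1)), s(p.getVert (k+1), p.getVert (k+2)),
          s(p.getVert (k+2), p.getVert (k+3))}).edist (p.getVert (k+1)) x ≤ 2 := by
      intro x hx
      have hx1 : (G.deleteEdges {s(p.getVert k, p.getVert (k+1))}).Reachable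
          (p.getVert (k+1)) x := hx.mono (deleteEdges_mono' (by simp))
      obtain ⟨hreach, hdist⟩ := key k (by omega) x hx1
      have hble : G.dist b x ≤ k + 3 := by
        rw [← hk]
        exact hzm x ((hreachu (k+1) (by omega)).trans hreach)
      rw [edist_transfer hG hx]
      have h2 : G.dist (p.getVert (k+1)) x ≤ 2 := by omega
      exact_mod_cast h2
    have hsub : {x : V | (G.deleteEdges {s(p.getVert k, p.getVert (k+1)),
          s(p.getVert (k+1), p.getVert (k+2)),
          s(p.getVert (k+2), p.getVert (k+3))}).Reachable (p.getVert (k+2)) x} ⊆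
        {x : V | (G.deleteEdges {s(v, a), s(a, b), s(b, w)}).Reachable b x} \ {b} := by
      intro x hx
      simp only [Set.mem_setOf_eq] at hx
      have hx1 : (G.deleteEdges {s(p.getVert (k+1), p.getVert (k+2))}).Reachable
          (p.getVert (k+2)) x := hx.mono (deleteEdges_mono' (by simp))
      obtain ⟨hreach, hdist⟩ := key (k+1) (by omega) x hx1
      constructor
      · exact (hreachu (k+2) (by omega)).trans hreach
      · simp only [Set.mem_singleton_iff]
        intro hxb
        rw [hxb, SimpleGraph.dist_self] at hdist
        omega
    have hcard2 : {x : V | (G.deleteEdges {s(p.getVert k, p.getVert (k+1)),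
          s(p.getVert (k+1), p.getVert (k+2)),
          s(p.getVert (k+2), p.getVert (k+3))}).Reachable (p.getVert (k+2)) x}.ncard ≤ n := by
      have h1 := Set.ncard_le_ncard hsub (Set.toFinite _)
      have hbmem : b ∈ {x : V | (G.deleteEdges {s(v, a), s(a, b), s(b, w)}).Reachable b x} :=
        Reachable.refl b
      rw [Set.ncard_diff_singleton_of_mem hbmem] at h1
      have hpos := (Set.ncard_pos (Set.toFinite _)).mpr ⟨b, hbmem⟩
      omega
    have hdistinct : ∀ i j, i ≤ p.length → j ≤ p.length → i ≠ j →
        p.getVert i ≠ p.getVert j := by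
      intro i j hi hj hij h
      have h1 := hgv i hi
      have h2 := hgv j hj
      rw [h, h2] at h1
      omega
    exact ih (p.getVert k) (p.getVert (k+1)) (p.getVert (k+2)) (p.getVert (k+3))
      hadj01 hadj12 hadj23
      (hdistinct k (k+2) (by omega) (by omega) (by omega))
      (hdistinct (k+1) (k+3) (by omega) (by omega) (by omega))
      (hdistinct k (k+3) (by omega) (by omega) (by omega))
      hsh2 hcard2

end MainProof
theorem stmt8 {V : Type} [Fintype V] (G : SimpleGraph V) (hG : G.IsTree)
    (hdiam : ∃ x y : V, 2 < G.edist x y) :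
    ∃ v a b w : V, G.Adj v a ∧ G.Adj a b ∧ G.Adj b w ∧
      v ≠ b ∧ a ≠ w ∧ v ≠ w ∧
      Set.ncard {x : V | (G.deleteEdges {s(v, a), s(a, b), s(b, w)}).edist a x ≤ 2} ≤
        Set.ncard {x : V | (G.deleteEdges {s(v, a), s(a, b), s(b, w)}).edist b x ≤ 2} ∧
      ∀ x : V, (G.deleteEdges {s(v, a), s(a, b), s(b, w)}).Reachable a x →
        (G.deleteEdges {s(v, a), s(a, b), s(b, w)}).edist a x ≤ 2 := by
  classical
  open SimpleGraph Walk in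
  obtain ⟨x0, y0, hxy⟩ := hdiam
  obtain ⟨pr, hprm, hprmax⟩ := Finset.exists_max_image (Finset.univ ×ˢ Finset.univ)
    (fun q : V × V => G.dist q.1 q.2) ⟨(x0, y0), by simp⟩
  have hmaxAll : ∀ x y : V, G.dist x y ≤ G.dist pr.1 pr.2 :=
    fun x y => hprmax (x, y) (by simp)
  have hL3 : 3 ≤ G.dist pr.1 pr.2 := by
    have hr : G.Reachable x0 y0 := hG.isConnected x0 y0
    rw [edist_cast' hr] at hxy
    have h2 : (2 : ℕ) < G.dist x0 y0 := by exact_mod_cast hxy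
    have := hmaxAll x0 y0
    omega
  obtain ⟨m, hm⟩ : ∃ m, G.dist pr.1 pr.2 = m + 3 := ⟨G.dist pr.1 pr.2 - 3, by omega⟩
  obtain ⟨p, hp, hpl⟩ := hG.isConnected.exists_path_of_dist pr.1 pr.2
  have hplen : p.length = m + 3 := by rw [hpl, hm]
  have hgv : ∀ i ≤ p.length, G.dist pr.1 (p.getVert i) = i :=
    fun i hi => (geodesic_getVert hpl hi).1
  have hgv2 : ∀ i ≤ p.length, G.dist (p.getVert i) pr.2 = p.length - i :=
    fun i hi => (geodesic_getVert hpl hi).2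
  have hadj01 : G.Adj (p.getVert 0) (p.getVert 1) := p.adj_getVert_succ (by omega)
  have hadj12 : G.Adj (p.getVert 1) (p.getVert 2) := p.adj_getVert_succ (by omega)
  have hadj23 : G.Adj (p.getVert 2) (p.getVert 3) := p.adj_getVert_succ (by omega)
  have hsh0 : ∀ x : V, (G.deleteEdges {s(p.getVert 0, p.getVert 1), s(p.getVert 1, p.getVert 2),
      s(p.getVert 2, p.getVert 3)}).Reachable (p.getVert 1) x →
      (G.deleteEdges {s(p.getVert 0, p.getVert 1), s(p.getVert 1, p.getVert 2),
      s(p.getVert 2, p.getVert 3)}).edist (p.getVert 1) x ≤ 2 := by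
    intro x hx
    have hx1 : (G.deleteEdges {s(p.getVert 2, p.getVert 1)}).Reachable (p.getVert 1) x := by
      rw [Sym2.eq_swap]
      exact hx.mono (deleteEdges_mono' (by simp))
    have hrev : p.reverse.IsPath := hp.reverse
    have hmem2 : p.getVert 2 ∈ p.reverse.support := by
      rw [Walk.support_reverse, List.mem_reverse]
      exact Walk.mem_support_iff_exists_getVert.mpr ⟨2, rfl, by omega⟩
    have hd1 : G.dist pr.2 (p.getVert 1) = m + 2 := by
      rw [SimpleGraph.dist_comm, hgv2 1 (by omega), hplen]; omega
    have hd2 : G.dist pr.2 (p.getVert 2) = m + 1 := by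
      rw [SimpleGraph.dist_comm, hgv2 2 (by omega), hplen]; omega
    have hprr : (G.deleteEdges {s(p.getVert 2, p.getVert 1)}).Reachable pr.2 (p.getVert 2) :=
      prefix_reach hG hrev hmem2 hadj12.symm (by rw [hd1, hd2])
    have hb := bridge_add hG hadj12.symm hprr.symm hx1
    have hble : G.dist pr.2 x ≤ m + 3 := by
      have h1 := hmaxAll pr.2 x
      omega
    rw [edist_transfer hG hx]
    have h2 : G.dist (p.getVert 1) x ≤ 2 := by
      rw [hd2] at hb
      omega
    exact_mod_cast h2
  have hdistinct : ∀ i j, i ≤ p.length → j ≤ p.length → i ≠ j →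
      p.getVert i ≠ p.getVert j := by
    intro i j hi hj hij h
    have h1 := hgv i hi
    have h2 := hgv j hj
    rw [h, h2] at h1
    omega
  exact main_ind hG
    ({x : V | (G.deleteEdges {s(p.getVert 0, p.getVert 1), s(p.getVert 1, p.getVert 2),
      s(p.getVert 2, p.getVert 3)}).Reachable (p.getVert 2) x}.ncard)
    (p.getVert 0) (p.getVert 1) (p.getVert 2) (p.getVert 3)
    hadj01 hadj12 hadj23
    (hdistinct 0 2 (by omega) (by omega) (by omega))
    (hdistinct 1 3 (by omega) (by omega) (by omega))
    (hdistinct 0 3 (by omega) (by omega) (by omega))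
    hsh0 le_rfl

end SwapGame
end

section
/- There exist constants c₁, c₂ > 0 such that for every n ≥ 6, the price of anarchy of the MAX swap game on n-vertex trees by pessimistic players with 3-local information satisfies c₁·n ≤ PoA_MAX(n, n−1, 3) ≤ c₂·n. -/
open SimpleGraph

namespace SwapGame

-- ===== auxiliary development =====

/-- graph on `Fin n` given by a parent function `f` on values. -/
def pg (n : ℕ) (f : ℕ → ℕ) : SimpleGraph (Fin n) where
  Adj a b := a ≠ b ∧ ((b : ℕ) = f a ∨ (a : ℕ) = f b)
  symm := by
    constructor
    rintro a b ⟨h1, h2⟩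
    exact ⟨h1.symm, h2.symm⟩
  loopless := by constructor; rintro a ⟨h1, _⟩; exact h1 rfl

variable {n : ℕ} {f : ℕ → ℕ}

/-- hypotheses: `f 0 = 0` and `f` decreasing. -/
def PFun (f : ℕ → ℕ) : Prop := f 0 = 0 ∧ ∀ k, 0 < k → f k < k

lemma pg_adj_of_lt (hf : PFun f) {a b : Fin n} (h : (pg n f).Adj a b)
    (hlt : (b : ℕ) < (a : ℕ)) : (b : ℕ) = f (a : ℕ) := by
  rcases h with ⟨hne, h | h⟩
  · exact h
  · rcases Nat.eq_zero_or_pos (b : ℕ) with hb | hb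
    · rw [hb, hf.1] at h
      omega
    · have := hf.2 _ hb
      omega

lemma pg_acyclic (hf : PFun f) : (pg n f).IsAcyclic := by
  intro v c hc
  classical
  have hvmem : v ∈ c.support := c.start_mem_support
  -- max vertex of the support
  set S : Finset (Fin n) := c.support.toFinset with hS
  have hSne : S.Nonempty := ⟨v, by simp [hS]⟩
  set k : Fin n := S.max' hSne with hk
  have hkmem : k ∈ c.support := by
    have := S.max'_mem hSne
    simpa [hS] using this
  have hmax : ∀ x ∈ c.support, (x : ℕ) ≤ (k : ℕ) := by
    intro x hx
    exact_mod_cast S.le_max' x (by simp [hS, hx])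
  have hc' := hc.rotate hkmem
  set c' := c.rotate k hkmem with hc'def
  have hedges : ∀ e, e ∈ c'.edges → e ∈ c.edges := by
    intro e he
    exact (Walk.rotate_edges c k hkmem).mem_iff.mp he
  cases hcc : c' with
  | nil => rw [hcc] at hc'; exact hc'.not_of_nil
  | cons hadj p =>
    rw [hcc, Walk.cons_isCycle_iff] at hc'
    obtain ⟨hp, hne⟩ := hc'
    rename_i b
    -- b is adjacent to k, in support
    have he1 : s(k, b) ∈ c.edges := hedges _ (by rw [hcc]; simp)
    have hbmem : b ∈ c.support := Walk.snd_mem_support_of_mem_edges c he1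
    have hbval : (b : ℕ) = f (k : ℕ) := by
      apply pg_adj_of_lt hf hadj
      have := hmax b hbmem
      have hne' : b ≠ k := hadj.ne'
      have : (b:ℕ) ≠ (k:ℕ) := fun h => hne' (Fin.ext h)
      omega
    -- last edge of p
    have hpnil : ¬ p.reverse.Nil := by
      rw [Walk.nil_iff_length_eq]
      rw [Walk.length_reverse]
      intro hlen
      rw [← Walk.nil_iff_length_eq] at hlen
      exact hadj.ne' hlen.eq
    obtain ⟨a', h2, q, hrev⟩ := Walk.not_nil_iff.mp hpnil
    · -- h2 : Adj k a', edge s(k, a') ∈ p.edges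
      have hemem : s(k, a') ∈ p.edges := by
        have : s(k, a') ∈ p.reverse.edges := by rw [hrev]; simp
        rw [Walk.edges_reverse, List.mem_reverse] at this
        exact this
      have he2 : s(k, a') ∈ c.edges := by
        apply hedges
        rw [hcc, Walk.edges_cons]
        exact List.mem_cons_of_mem _ hemem
      have hamem : a' ∈ c.support := Walk.snd_mem_support_of_mem_edges c he2
      have haval : (a' : ℕ) = f (k : ℕ) := by
        apply pg_adj_of_lt hf h2
        have := hmax a' hamem
        have hne' : a' ≠ k := h2.ne'
        have : (a':ℕ) ≠ (k:ℕ) := fun h => hne' (Fin.ext h)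
        omega
      have : a' = b := Fin.ext (haval.trans hbval.symm)
      rw [this] at hemem
      exact hne hemem


lemma pg_reachable_zero (hf : PFun f) (hn : 0 < n) (a : Fin n) :
    (pg n f).Reachable a ⟨0, hn⟩ := by
  have H : ∀ k, ∀ a : Fin n, (a : ℕ) ≤ k → (pg n f).Reachable a ⟨0, hn⟩ := by
    intro k
    induction k with
    | zero =>
      intro a h
      have : a = ⟨0, hn⟩ := Fin.ext (by simp; omega)
      rw [this]
    | succ k ih =>
      intro a h
      rcases Nat.eq_zero_or_pos (a : ℕ) with h0 | h0
      · have : a = ⟨0, hn⟩ := Fin.ext h0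
        rw [this]
      · have hlt : f (a : ℕ) < (a : ℕ) := hf.2 _ h0
        have hfn : f (a : ℕ) < n := hlt.trans a.isLt
        have hadj : (pg n f).Adj a ⟨f (a : ℕ), hfn⟩ := by
          refine ⟨fun hh => ?_, Or.inl rfl⟩
          have := congrArg Fin.val hh
          simp at this
          omega
        exact hadj.reachable.trans (ih _ (by simp; omega))
  exact H n a a.isLt.le

lemma pg_connected (hf : PFun f) (hn : 0 < n) : (pg n f).Connected := by
  rw [connected_iff]
  refine ⟨fun a b => ?_, ⟨⟨0, hn⟩⟩⟩
  exact (pg_reachable_zero hf hn a).trans (pg_reachable_zero hf hn b).symm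

lemma pg_isTree (hf : PFun f) (hn : 0 < n) : (pg n f).IsTree :=
  ⟨pg_connected hf hn, pg_acyclic hf⟩

section walkLemmas

variable {V : Type} {G : SimpleGraph V}

lemma edist_support_le {u a : V} (p : G.Walk u a) :
    ∀ y ∈ p.support, G.edist u y ≤ p.length := by
  induction p with
  | nil =>
    intro y hy
    rw [Walk.mem_support_nil_iff] at hy
    subst hy
    simp [edist_self]
  | @cons u b a h q ih =>
    intro y hy
    rw [Walk.support_cons, List.mem_cons] at hy
    rcases hy with rfl | hy
    · simp [edist_self]
    · calc G.edist u y ≤ G.edist u b + G.edist b y := G.edist_triangle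
        _ ≤ 1 + q.length := by
            gcongr
            · exact le_of_eq (edist_eq_one_iff_adj.mpr h)
            · exact ih y hy
        _ = (q.length + 1 : ℕ) := by rw [add_comm]; push_cast; rfl
        _ = ((Walk.cons h q).length : ℕ∞) := by rw [Walk.length_cons]

lemma walk_induce {S : Set V} {a c : V} (p : G.Walk a c)
    (hs : ∀ y ∈ p.support, y ∈ S) :
    ∃ q : (G.induce S).Walk ⟨a, hs a p.start_mem_support⟩ ⟨c, hs c p.end_mem_support⟩,
      q.length = p.length := by
  induction p with
  | nil => exact ⟨Walk.nil, rfl⟩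
  | @cons a b c h q ih =>
    have hs' : ∀ y ∈ q.support, y ∈ S := fun y hy =>
      hs y (by rw [Walk.support_cons]; exact List.mem_cons_of_mem _ hy)
    obtain ⟨q', hq'⟩ := ih hs'
    have hadj : (G.induce S).Adj ⟨a, hs a (Walk.cons h q).start_mem_support⟩
        ⟨b, hs' b q.start_mem_support⟩ := by
      simp only [comap_adj, Function.Embedding.coe_subtype]
      exact h
    exact ⟨Walk.cons hadj q', by rw [Walk.length_cons, hq', Walk.length_cons]⟩

lemma three_le_edist {u x : V} (h0 : u ≠ x)
    (h1 : ¬ G.Adj u x) (h2 : ∀ c, G.Adj u c → ¬ G.Adj c x) :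
    3 ≤ G.edist u x := by
  by_contra hcon
  push_neg at hcon
  have hne : G.edist u x ≠ ⊤ := fun ht => by rw [ht] at hcon; exact (not_top_lt hcon)
  obtain ⟨p, hp⟩ := (reachable_of_edist_ne_top hne).exists_walk_length_eq_edist
  have hlen : p.length < 3 := by
    have : (p.length : ℕ∞) < 3 := by rw [hp]; exact hcon
    exact_mod_cast this
  cases p with
  | nil => exact h0 rfl
  | @cons _ b _ h q =>
    cases q with
    | nil => exact h1 h
    | @cons _ c _ h' q' =>
      cases q' with
      | nil => exact h2 b h h'
      | cons h'' q'' => rw [Walk.length_cons, Walk.length_cons, Walk.length_cons] at hlen; omega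

lemma lip_walk (g : V → ℕ) (hg : ∀ a b, G.Adj a b → g b ≤ g a + 1) :
    ∀ {a b : V} (p : G.Walk a b), g b ≤ g a + p.length := by
  intro a b p
  induction p with
  | nil => simp
  | @cons a c b h q ih =>
    calc g b ≤ g c + q.length := ih
      _ ≤ (g a + 1) + q.length := by have := hg a c h; omega
      _ = g a + (Walk.cons h q).length := by rw [Walk.length_cons]; omega

end walkLemmas



-- ===== the blocking lemma =====

lemma mem_ball_of_edist {n : ℕ} {G : SimpleGraph (Fin n)} {u a : Fin n}
    (h : G.edist u a ≤ 3) : a ∈ ball G u 3 := by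
  simp only [ball, Set.mem_setOf_eq]
  exact_mod_cast h

lemma ball_edist_le {n : ℕ} {G : SimpleGraph (Fin n)} {u a : Fin n}
    (h : a ∈ ball G u 3) : G.edist u a ≤ 3 := by
  simp only [ball, Set.mem_setOf_eq] at h
  exact_mod_cast h

lemma block {n : ℕ} (G : SimpleGraph (Fin n)) {u v w x : Fin n}
    (hx3 : G.edist u x ≤ 3) (hxu : x ≠ u) (hxw : x ≠ w)
    (hxN : ¬ G.Adj u x ∨ x = v)
    (hy : ∀ y, G.Adj y x → y ≠ u → ((¬ G.Adj u y ∨ y = v) ∧ y ≠ w)) :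
    ¬ UnhappyMaxVia G 3 u v w := by
  rintro ⟨⟨hadjv, hw3, hwnadj, hwu⟩, hall⟩
  classical
  set S : Set (Fin n) := ball G u 3 with hS
  have hu : u ∈ S := mem_ball_of_edist (by simp [edist_self])
  have hv : v ∈ S := mem_ball_of_edist (by
    rw [edist_eq_one_iff_adj.mpr hadjv]
    norm_num)
  have hw : w ∈ S := by rw [hS]; simpa [ball] using hw3
  have hx : x ∈ S := mem_ball_of_edist hx3
  set H : SimpleGraph S := G.induce S with hH
  set ι : Fin n → S := fun a => if h : a ∈ S then ⟨a, h⟩ else ⟨u, hu⟩ with hι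
  have hιS : ∀ (a : Fin n) (h : a ∈ S), ι a = ⟨a, h⟩ := fun a h => dif_pos h
  set su : S := ⟨u, hu⟩
  set sv : S := ⟨v, hv⟩
  set sw : S := ⟨w, hw⟩
  set sx : S := ⟨x, hx⟩
  have hιu : ι u = su := hιS u hu
  have hιv : ι v = sv := hιS v hv
  have hιw : ι w = sw := hιS w hw
  have hHadj : ∀ (a b : Fin n) (ha : a ∈ S) (hb : b ∈ S),
      H.Adj ⟨a, ha⟩ ⟨b, hb⟩ ↔ G.Adj a b := by
    intro a b ha hb
    rw [hH]
    simp [comap_adj]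
  -- short walks in the induced ball
  have key : ∀ (z : S), ∃ q : H.Walk su z, q.length ≤ 3 := by
    rintro ⟨a, ha⟩
    have ha3 : G.edist u a ≤ 3 := ball_edist_le ha
    have hne : G.edist u a ≠ ⊤ := by
      intro ht
      rw [ht] at ha3
      exact (by norm_num : ¬ ((⊤:ℕ∞) ≤ 3)) ha3
    obtain ⟨p, hp⟩ := (reachable_of_edist_ne_top hne).exists_walk_length_eq_edist
    have hplen : (p.length : ℕ∞) ≤ 3 := by rw [hp]; exact ha3
    have hsupp : ∀ y ∈ p.support, y ∈ S := by
      intro y hyp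
      exact mem_ball_of_edist (le_trans (edist_support_le p y hyp) hplen)
    obtain ⟨q, hq⟩ := walk_induce p hsupp
    refine ⟨q, ?_⟩
    rw [hq]
    exact_mod_cast hplen
  have hedist3 : ∀ z : S, H.edist su z ≤ 3 := by
    intro z
    obtain ⟨q, hq⟩ := key z
    calc H.edist su z ≤ (q.length : ℕ∞) := edist_le q
      _ ≤ 3 := by exact_mod_cast hq
  have hconn : H.Connected := by
    rw [connected_iff]
    refine ⟨fun a b => ?_, ⟨su⟩⟩
    obtain ⟨qa, _⟩ := key a
    obtain ⟨qb, _⟩ := key b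
    exact qa.reachable.symm.trans qb.reachable
  have hcompat : Compatible G 3 u H ι := by
    refine ⟨inferInstance, hconn, ?_, ?_, ?_⟩
    · intro a ha b hb heq
      rw [hιS a ha, hιS b hb] at heq
      exact congrArg Subtype.val heq
    · ext z
      simp only [Set.mem_setOf_eq, Set.mem_image]
      constructor
      · intro _
        exact ⟨z.val, z.prop, hιS z.val z.prop⟩
      · intro _
        rw [hιu]
        exact_mod_cast hedist3 z
    · intro a ha b hb
      rw [hιS a ha, hιS b hb]
      exact hHadj a b ha hb
  have hlt := hall S H ι hcompat
  set H' : SimpleGraph S := swapGraph H (ι u) (ι v) (ι w) with hH'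
  -- adjacency characterization of the swapped graph
  have hadj' : ∀ a b : S, H'.Adj a b ↔
      ((s(a, b) ∈ H.edgeSet ∧ s(a, b) ≠ s(su, sv)) ∨ s(a, b) = s(su, sw)) ∧ a ≠ b := by
    intro a b
    rw [hH', swapGraph, fromEdgeSet_adj, hιu, hιv, hιw]
    constructor
    · rintro ⟨hm, hne⟩
      refine ⟨?_, hne⟩
      rcases hm with ⟨he, hns⟩ | hsing
      · exact Or.inl ⟨he, by simpa using hns⟩
      · exact Or.inr (by simpa using hsing)
    · rintro ⟨hm, hne⟩
      refine ⟨?_, hne⟩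
      rcases hm with ⟨he, hns⟩ | hsing
      · exact Or.inl ⟨he, by simpa using hns⟩
      · exact Or.inr (by simpa using hsing)
  have hsu_ne_sw : su ≠ sw := fun h => hwu (congrArg Subtype.val h).symm
  -- the vertex x stays at distance ≥ 3 after the swap
  have hfar : 3 ≤ H'.edist su sx := by
    apply three_le_edist
    · exact fun h => hxu (congrArg Subtype.val h).symm
    · intro hAdj
      rw [hadj'] at hAdj
      obtain ⟨hm, -⟩ := hAdj
      rcases hm with ⟨he, hns⟩ | hsing
      · have hGux : G.Adj u x := by
          rw [← mem_edgeSet] at *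
          exact (hHadj u x hu hx).mp he
        rcases hxN with hnadj | rfl
        · exact hnadj hGux
        · exact hns rfl
      · rw [Sym2.eq_iff] at hsing
        rcases hsing with ⟨-, hxe⟩ | ⟨hue, -⟩
        · exact hxw (congrArg Subtype.val hxe)
        · exact hsu_ne_sw hue
    · rintro ⟨c, hc⟩ hc1 hc2
      rw [hadj'] at hc1 hc2
      obtain ⟨hm1, hne1⟩ := hc1
      obtain ⟨hm2, hne2⟩ := hc2
      have hcu : c ≠ u := fun h => hne1 (Subtype.ext h).symm
      -- from the second edge: G.Adj c x
      have hGcx : G.Adj c x := by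
        rcases hm2 with ⟨he, -⟩ | hsing
        · exact (hHadj c x _ hx).mp he
        · rw [Sym2.eq_iff] at hsing
          exfalso
          rcases hsing with ⟨-, hxe⟩ | ⟨-, hxe⟩
          · exact hxw (congrArg Subtype.val hxe)
          · exact hxu (congrArg Subtype.val hxe)
      obtain ⟨hy1, hy2⟩ := hy c hGcx hcu
      rcases hm1 with ⟨he, hns⟩ | hsing
      · have hGuc : G.Adj u c := (hHadj u c hu _).mp he
        rcases hy1 with hnadj | rfl
        · exact hnadj hGuc
        · exact hns (by rfl)
      · rw [Sym2.eq_iff] at hsing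
        rcases hsing with ⟨-, hce⟩ | ⟨hue, -⟩
        · exact hy2 (congrArg Subtype.val hce)
        · exact hsu_ne_sw hue
  -- contradiction
  have h1 : cMax H (ι u) ≤ 3 := by
    rw [hιu, cMax]
    exact iSup_le hedist3
  have h2 : (3 : ℕ∞) ≤ cMax H' (ι u) := by
    rw [hιu, cMax]
    exact le_trans hfar (le_iSup (fun z => H'.edist su z) sx)
  exact absurd (h2.trans_lt (hlt.trans_le h1)) (by norm_num)

-- ===== the caterpillar =====

/-- parent function of the caterpillar: spine `0,3,…,3(m-1)`, two leaf children
`3j+1, 3j+2` of each spine vertex `3j`, extra vertices `≥ 3m` attached to `0`. -/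
def par3 (m : ℕ) : ℕ → ℕ := fun k =>
  if 3*m ≤ k then 0 else if k % 3 = 0 then k - 3 else k - k % 3

lemma par3_pfun (m : ℕ) : PFun (par3 m) := by
  constructor
  · unfold par3; split_ifs <;> omega
  · intro k hk; unfold par3; split_ifs <;> omega

lemma par3_spine {m : ℕ} (hm : 0 < m) (j : ℕ) :
    (par3 m j) % 3 = 0 ∧ par3 m j < 3*m := by
  unfold par3; split_ifs <;> omega

lemma leaf_adj {n m : ℕ} (hm : 0 < m) {a k : Fin n}
    (hk : ¬ ((k:ℕ) % 3 = 0 ∧ (k:ℕ) < 3*m)) :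
    (pg n (par3 m)).Adj a k ↔ (a : ℕ) = par3 m (k : ℕ) := by
  constructor
  · rintro ⟨hne, h | h⟩
    · exact absurd (h ▸ par3_spine hm (a:ℕ)) hk
    · exact h
  · intro h
    have hk0 : (k:ℕ) ≠ 0 := by
      intro h0
      exact hk ⟨by omega, by omega⟩
    have : par3 m (k:ℕ) < (k:ℕ) := (par3_pfun m).2 _ (by omega)
    exact ⟨fun he => by apply_fun Fin.val at he; omega, Or.inr h⟩

lemma edist_le_three_of_adj_adj {V' : Type} {G : SimpleGraph V'} {u v x : V'}
    (h1 : G.Adj u v) (h2 : G.Adj v x) : G.edist u x ≤ 3 := by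
  calc G.edist u x ≤ G.edist u v + G.edist v x := G.edist_triangle
    _ = 1 + 1 := by rw [edist_eq_one_iff_adj.mpr h1, edist_eq_one_iff_adj.mpr h2]
    _ ≤ 3 := by norm_num

lemma block_via_leaf {n m : ℕ} (hm0 : 0 < m) {u v w x : Fin n}
    (hadj : (pg n (par3 m)).Adj u v) (hwnadj : ¬ (pg n (par3 m)).Adj u w)
    (hxleaf : ¬ ((x:ℕ) % 3 = 0 ∧ (x:ℕ) < 3*m)) (hpx : par3 m (x:ℕ) = (v:ℕ))
    (hxu : (x:ℕ) ≠ (u:ℕ)) (hxw : (x:ℕ) ≠ (w:ℕ)) :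
    ¬ UnhappyMaxVia (pg n (par3 m)) 3 u v w := by
  have hvw : v ≠ w := fun h => hwnadj (h ▸ hadj)
  have hvx : (pg n (par3 m)).Adj v x := (leaf_adj hm0 hxleaf).mpr hpx.symm
  refine block (pg n (par3 m)) (x := x) (edist_le_three_of_adj_adj hadj hvx)
    (fun h => hxu (congrArg Fin.val h)) (fun h => hxw (congrArg Fin.val h)) ?_ ?_
  · left
    intro h
    have h2 := (leaf_adj hm0 hxleaf).mp h
    rw [hpx] at h2
    exact hadj.ne (Fin.ext h2)
  · intro y hyx _
    have h2 := (leaf_adj hm0 hxleaf).mp hyx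
    rw [hpx] at h2
    have : y = v := Fin.ext h2
    subst this
    exact ⟨Or.inr rfl, hvw⟩

theorem cat_equilibrium {n m : ℕ} (h3m : 3*m ≤ n) (hn3 : n < 3*m+3) (hm2 : 2 ≤ m) :
    MaxEquilibrium (pg n (par3 m)) 3 := by
  have hm0 : 0 < m := by omega
  rintro u ⟨v, w, hU⟩
  have hadj : (pg n (par3 m)).Adj u v := hU.1.1
  have hwnadj : ¬ (pg n (par3 m)).Adj u w := hU.1.2.2.1
  have hwu : w ≠ u := hU.1.2.2.2
  have hvw : v ≠ w := fun h => hwnadj (h ▸ hadj)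
  have hUn : (u:ℕ) < n := u.isLt
  have hVn : (v:ℕ) < n := v.isLt
  have hWn : (w:ℕ) < n := w.isLt
  have hUV : (u:ℕ) ≠ (v:ℕ) := fun h => hadj.ne (Fin.ext h)
  have hVW : (v:ℕ) ≠ (w:ℕ) := fun h => hvw (Fin.ext h)
  have hWU : (w:ℕ) ≠ (u:ℕ) := fun h => hwu (Fin.ext h)
  by_cases hus : (u:ℕ) % 3 = 0 ∧ (u:ℕ) < 3*m
  · -- u is a spine vertex
    by_cases hvs : (v:ℕ) % 3 = 0 ∧ (v:ℕ) < 3*m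
    · -- v is a spine vertex; pick a leaf child of v distinct from w
      have hc1 : (v:ℕ) + 1 < n := by omega
      have hc2 : (v:ℕ) + 2 < n := by omega
      by_cases hw1 : (w:ℕ) = (v:ℕ) + 1
      · refine block_via_leaf hm0 hadj hwnadj (x := ⟨(v:ℕ)+2, hc2⟩)
          (show ¬ (((v:ℕ)+2) % 3 = 0 ∧ (v:ℕ)+2 < 3*m) from by omega)
          (show par3 m ((v:ℕ)+2) = (v:ℕ) from by unfold par3; split_ifs <;> omega)
          (show (v:ℕ)+2 ≠ (u:ℕ) from by omega)
          (show (v:ℕ)+2 ≠ (w:ℕ) from by omega) hU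
      · refine block_via_leaf hm0 hadj hwnadj (x := ⟨(v:ℕ)+1, hc1⟩)
          (show ¬ (((v:ℕ)+1) % 3 = 0 ∧ (v:ℕ)+1 < 3*m) from by omega)
          (show par3 m ((v:ℕ)+1) = (v:ℕ) from by unfold par3; split_ifs <;> omega)
          (show (v:ℕ)+1 ≠ (u:ℕ) from by omega)
          (show (v:ℕ)+1 ≠ (w:ℕ) from by omega) hU
    · -- v is a leaf; x := v
      have hUparV : (u:ℕ) = par3 m (v:ℕ) := by
        rcases hadj.2 with h | h
        · exact absurd (show (v:ℕ)%3=0 ∧ (v:ℕ)<3*m by rw [h]; exact par3_spine hm0 _) hvs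
        · exact h
      refine block (pg n (par3 m)) (x := v)
        (by rw [edist_eq_one_iff_adj.mpr hadj]; norm_num)
        hadj.ne' hvw (Or.inr rfl) ?_ hU
      intro y hyv hyu
      exfalso
      have h2 := (leaf_adj hm0 hvs).mp hyv
      rw [← hUparV] at h2
      exact hyu (Fin.ext h2)
  · -- u is a leaf
    have hU0 : (u:ℕ) ≠ 0 := fun h => hus ⟨by omega, by omega⟩
    have hVparU : (v:ℕ) = par3 m (u:ℕ) := by
      rcases hadj.2 with h | h
      · exact h
      · exact absurd (show (u:ℕ)%3=0 ∧ (u:ℕ)<3*m by rw [h]; exact par3_spine hm0 _) hus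
    have hvs : (v:ℕ) % 3 = 0 ∧ (v:ℕ) < 3*m := by rw [hVparU]; exact par3_spine hm0 _
    have hVU : (v:ℕ) < (u:ℕ) := by
      rw [hVparU]; exact (par3_pfun m).2 _ (by omega)
    have hadj_u_iff : ∀ y : Fin n, (pg n (par3 m)).Adj u y ↔ (y:ℕ) = (v:ℕ) := by
      intro y
      rw [adj_comm]
      rw [leaf_adj hm0 hus, ← hVparU]
    have hc1 : (v:ℕ) + 1 < n := by omega
    have hc2 : (v:ℕ) + 2 < n := by omega
    by_cases hs1 : (w:ℕ) ≠ (v:ℕ) + 1 ∧ (u:ℕ) ≠ (v:ℕ) + 1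
    · refine block_via_leaf hm0 hadj hwnadj (x := ⟨(v:ℕ)+1, hc1⟩)
          (show ¬ (((v:ℕ)+1) % 3 = 0 ∧ (v:ℕ)+1 < 3*m) from by omega)
          (show par3 m ((v:ℕ)+1) = (v:ℕ) from by unfold par3; split_ifs <;> omega)
          (show (v:ℕ)+1 ≠ (u:ℕ) from by omega)
          (show (v:ℕ)+1 ≠ (w:ℕ) from by omega) hU
    · by_cases hs2 : (w:ℕ) ≠ (v:ℕ) + 2 ∧ (u:ℕ) ≠ (v:ℕ) + 2
      · refine block_via_leaf hm0 hadj hwnadj (x := ⟨(v:ℕ)+2, hc2⟩)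
          (show ¬ (((v:ℕ)+2) % 3 = 0 ∧ (v:ℕ)+2 < 3*m) from by omega)
          (show par3 m ((v:ℕ)+2) = (v:ℕ) from by unfold par3; split_ifs <;> omega)
          (show (v:ℕ)+2 ≠ (u:ℕ) from by omega)
          (show (v:ℕ)+2 ≠ (w:ℕ) from by omega) hU
      · -- w is the sibling of u; x := a spine neighbour z of v
        push_neg at hs1 hs2
        have hwsib : (w:ℕ) = (v:ℕ)+1 ∨ (w:ℕ) = (v:ℕ)+2 := by
          by_cases h1 : (w:ℕ) = (v:ℕ)+1
          · exact Or.inl h1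
          · have hu1 : (u:ℕ) = (v:ℕ)+1 := hs1 h1
            by_cases h2 : (w:ℕ) = (v:ℕ)+2
            · exact Or.inr h2
            · have := hs2 h2
              omega
        have hwleaf : ¬ ((w:ℕ) % 3 = 0 ∧ (w:ℕ) < 3*m) := by omega
        have hparw : par3 m (w:ℕ) = (v:ℕ) := by
          unfold par3; split_ifs <;> omega
        have hz : (if (v:ℕ) = 0 then 3 else (v:ℕ) - 3) < n := by split_ifs <;> omega
        set z : Fin n := ⟨if (v:ℕ) = 0 then 3 else (v:ℕ) - 3, hz⟩ with hzdef
        have hzval : (z:ℕ) = if (v:ℕ) = 0 then 3 else (v:ℕ) - 3 := rfl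
        have hzfacts : (z:ℕ) % 3 = 0 ∧ (z:ℕ) < 3*m ∧ (z:ℕ) ≠ (v:ℕ) := by
          rw [hzval]; split_ifs <;> omega
        have hvz : (pg n (par3 m)).Adj v z := by
          refine ⟨fun h => hzfacts.2.2 (congrArg Fin.val h).symm, ?_⟩
          by_cases h0 : (v:ℕ) = 0
          · refine Or.inr ?_
            show (v:ℕ) = par3 m (z:ℕ)
            rw [hzval, if_pos h0]
            unfold par3
            split_ifs <;> omega
          · refine Or.inl ?_
            show (z:ℕ) = par3 m (v:ℕ)
            rw [hzval, if_neg h0]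
            unfold par3
            split_ifs <;> omega
        refine block (pg n (par3 m)) (x := z) (edist_le_three_of_adj_adj hadj hvz)
          (fun h => by
            have := congrArg Fin.val h
            rw [hzval] at this
            split_ifs at this <;> omega)
          (fun h => by
            have := congrArg Fin.val h
            rw [hzval] at this
            split_ifs at this <;> omega)
          ?_ ?_ hU
        · left
          intro h
          exact hzfacts.2.2 ((hadj_u_iff z).mp h)
        · intro y hyz hyu
          constructor
          · by_cases hyv : y = v
            · exact Or.inr hyv
            · left
              intro h
              exact hyv (Fin.ext ((hadj_u_iff y).mp h))
          · intro hyw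
            subst hyw
            have h2 := (leaf_adj hm0 hwleaf).mp hyz.symm
            rw [hparw] at h2
            exact hzfacts.2.2 h2

-- ===== social cost bounds =====

lemma dist_le_card {n : ℕ} {G : SimpleGraph (Fin n)} (hc : G.Connected) (u v : Fin n) :
    G.dist u v ≤ n := by
  obtain ⟨p, hp, hlen⟩ := hc.exists_path_of_dist u v
  have := hp.length_lt
  rw [Fintype.card_fin] at this
  omega

lemma scMax_le {n : ℕ} {G : SimpleGraph (Fin n)} (hc : G.Connected) :
    scMax G ≤ n * n := by
  calc scMax G ≤ ∑ _u : Fin n, n := by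
        apply Finset.sum_le_sum
        intro u _
        exact Finset.sup_le fun v _ => dist_le_card hc u v
    _ = n * n := by simp [Finset.sum_const, Finset.card_univ, mul_comm]

lemma scMax_ge {n : ℕ} (hn : 2 ≤ n) {G : SimpleGraph (Fin n)} (hc : G.Connected) :
    n ≤ scMax G := by
  calc (n : ℕ) = ∑ _u : Fin n, 1 := by simp
    _ ≤ scMax G := by
        apply Finset.sum_le_sum
        intro u _
        obtain ⟨b, hb⟩ := Fintype.exists_ne_of_one_lt_card (by simp; omega) u
        calc 1 ≤ G.dist u b := by
              have := hc.pos_dist_of_ne (Ne.symm hb)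
              omega
          _ ≤ Finset.univ.sup (G.dist u) := Finset.le_sup (Finset.mem_univ b)

-- the star graph has social MAX-cost at most 2n
lemma star_dist_le {n : ℕ} (hn : 0 < n) (u v : Fin n) :
    (pg n (fun _ => 0)).dist u v ≤ 2 := by
  set G := pg n (fun _ => 0) with hG
  have hadj : ∀ a : Fin n, (a:ℕ) ≠ 0 → G.Adj a ⟨0, hn⟩ := by
    intro a ha
    exact ⟨fun h => ha (congrArg Fin.val h), Or.inl rfl⟩
  by_cases huv : u = v
  · subst huv; rw [SimpleGraph.dist_self]; omega
  · by_cases hu0 : (u:ℕ) = 0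
    · have hv0' : (v:ℕ) ≠ 0 := by
        intro h
        exact huv (Fin.ext (by omega))
      have : G.Adj u v := by
        have h2 := (hadj v hv0').symm
        have hu' : u = ⟨0, hn⟩ := Fin.ext hu0
        rw [hu']
        exact h2
      rw [dist_eq_one_iff_adj.mpr this]; omega
    · by_cases hv0 : (v:ℕ) = 0
      · have hv : v = ⟨0, hn⟩ := Fin.ext hv0
        have : G.Adj u v := hv ▸ hadj u hu0
        rw [dist_eq_one_iff_adj.mpr this]; omega
      · have h1 : G.Adj u ⟨0, hn⟩ := hadj u hu0
        have h2 : G.Adj ⟨0, hn⟩ v := (hadj v hv0).symm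
        calc G.dist u v ≤ (Walk.cons h1 (Walk.cons h2 Walk.nil)).length := dist_le _
          _ = 2 := by simp
  
lemma star_scMax {n : ℕ} (hn : 0 < n) : scMax (pg n (fun _ => 0)) ≤ 2 * n := by
  calc scMax (pg n (fun _ => 0)) ≤ ∑ _u : Fin n, 2 := by
        apply Finset.sum_le_sum
        intro u _
        exact Finset.sup_le fun v _ => star_dist_le hn u v
    _ = 2 * n := by simp [Finset.sum_const, Finset.card_univ, mul_comm]

-- lower bound for the caterpillar's social MAX-cost
lemma cat_scMax {n m : ℕ} (h3m : 3*m ≤ n) (hn3 : n < 3*m+3) (hm2 : 2 ≤ m) :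
    n * (m - 1) ≤ 2 * scMax (pg n (par3 m)) := by
  have hm0 : 0 < m := by omega
  have hn0 : 0 < n := by omega
  set G := pg n (par3 m) with hG
  have hconn : G.Connected := pg_connected (par3_pfun m) hn0
  set g : Fin n → ℕ := fun k => if (k:ℕ) < 3*m then (k:ℕ)/3 else 0 with hg
  have hlip : ∀ a b : Fin n, G.Adj a b → g b ≤ g a + 1 := by
    have hkey : ∀ a b : Fin n, (b:ℕ) = par3 m (a:ℕ) → g b ≤ g a + 1 ∧ g a ≤ g b + 1 := by
      intro a b hab
      rw [hg]
      simp only []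
      unfold par3 at hab
      split_ifs at hab ⊢ <;> omega
    rintro a b ⟨hne, h | h⟩
    · exact (hkey a b h).1
    · exact (hkey b a h).2
  have hlipd : ∀ (a b : Fin n), g b ≤ g a + G.dist a b := by
    intro a b
    obtain ⟨p, hp⟩ := (hconn a b).exists_walk_length_eq_dist
    rw [← hp]
    exact lip_walk g hlip p
  set a0 : Fin n := ⟨0, hn0⟩ with ha0
  have hbn : 3*(m-1) < n := by omega
  set b0 : Fin n := ⟨3*(m-1), hbn⟩ with hb0
  have hdist : m - 1 ≤ G.dist a0 b0 := by
    have h := hlipd a0 b0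
    have e1 : g a0 = 0 := by
      show (if (0:ℕ) < 3*m then (0:ℕ)/3 else 0) = 0
      split_ifs <;> omega
    have e2 : g b0 = m - 1 := by
      show (if 3*(m-1) < 3*m then 3*(m-1)/3 else 0) = m - 1
      split_ifs <;> omega
    rw [e1, e2] at h
    omega
  calc n * (m-1) = ∑ _u : Fin n, (m-1) := by simp [Finset.sum_const, Finset.card_univ, mul_comm]
    _ ≤ ∑ u : Fin n, 2 * Finset.univ.sup (G.dist u) := by
        apply Finset.sum_le_sum
        intro u _
        have h1 : G.dist a0 b0 ≤ G.dist a0 u + G.dist u b0 := hconn.dist_triangle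
        have h2 : G.dist a0 u ≤ Finset.univ.sup (G.dist u) := by
          rw [SimpleGraph.dist_comm]
          exact Finset.le_sup (Finset.mem_univ a0)
        have h3 : G.dist u b0 ≤ Finset.univ.sup (G.dist u) := Finset.le_sup (Finset.mem_univ b0)
        omega
    _ = 2 * scMax G := by rw [scMax, Finset.mul_sum]

-- ===== main theorem =====

theorem stmt10 : ∃ c₁ c₂ : ℚ, 0 < c₁ ∧ 0 < c₂ ∧
    ∀ n : ℕ, 6 ≤ n →
      c₁ * n ≤ PoA n (fun T => MaxEquilibrium T 3) scMax ∧
      PoA n (fun T => MaxEquilibrium T 3) scMax ≤ c₂ * n := by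
  refine ⟨1/72, 1, by norm_num, by norm_num, ?_⟩
  intro n hn6
  set m := n / 3 with hm
  have h3m : 3*m ≤ n := by omega
  have hn3 : n < 3*m+3 := by omega
  have hm2 : 2 ≤ m := by omega
  have hn0 : 0 < n := by omega
  set T := pg n (par3 m) with hT
  have hTtree : T.IsTree := pg_isTree (par3_pfun m) hn0
  have hTeq : MaxEquilibrium T 3 := cat_equilibrium h3m hn3 hm2
  set St := pg n (fun _ => 0) with hSt
  have hSttree : St.IsTree := pg_isTree ⟨rfl, fun k hk => hk⟩ hn0
  set A : Set ℕ := {k : ℕ | ∃ T' : SimpleGraph (Fin n), T'.IsTree ∧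
    MaxEquilibrium T' 3 ∧ scMax T' = k} with hA
  set B : Set ℕ := {k : ℕ | ∃ T' : SimpleGraph (Fin n), T'.IsTree ∧ scMax T' = k} with hB
  have hAmem : scMax T ∈ A := ⟨T, hTtree, hTeq, rfl⟩
  have hBmem : scMax St ∈ B := ⟨St, hSttree, rfl⟩
  have hAub : ∀ k ∈ A, k ≤ n*n := by
    rintro k ⟨T', ht, _, hsc⟩
    exact hsc ▸ scMax_le ht.isConnected
  have hS1 : scMax T ≤ sSup A := le_csSup ⟨n*n, fun k hk => hAub k hk⟩ hAmem
  have hS2 : sSup A ≤ n*n := csSup_le ⟨_, hAmem⟩ hAub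
  have hI1 : sInf B ≤ 2*n := le_trans (Nat.sInf_le hBmem) (star_scMax hn0)
  have hI2 : n ≤ sInf B := le_csInf ⟨_, hBmem⟩ (by
    rintro k ⟨T', ht, hsc⟩
    exact hsc ▸ scMax_ge (by omega) ht.isConnected)
  have hSlow : n*(m-1) ≤ 2 * scMax T := cat_scMax h3m hn3 hm2
  have h18 : n ≤ 18*(m-1) := by omega
  have KEY1 : n * sInf B ≤ 72 * sSup A := by
    calc n * sInf B ≤ n * (2*n) := Nat.mul_le_mul_left _ hI1
      _ ≤ (18*(m-1)) * (2*n) := Nat.mul_le_mul_right _ h18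
      _ = 36 * (n * (m-1)) := by ring
      _ ≤ 36 * (2 * scMax T) := Nat.mul_le_mul_left _ hSlow
      _ = 72 * scMax T := by ring
      _ ≤ 72 * sSup A := Nat.mul_le_mul_left _ hS1
  have KEY2 : sSup A ≤ n * sInf B := by
    calc sSup A ≤ n*n := hS2
      _ ≤ n * sInf B := Nat.mul_le_mul_left _ hI2
  have hPoA : PoA n (fun T => MaxEquilibrium T 3) scMax
      = ((sSup A : ℕ) : ℚ) / ((sInf B : ℕ) : ℚ) := rfl
  have hIpos : (0:ℚ) < ((sInf B : ℕ) : ℚ) := by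
    have : 0 < sInf B := by omega
    exact_mod_cast this
  have c1 : ((n : ℚ) * (sInf B : ℕ)) ≤ 72 * ((sSup A : ℕ) : ℚ) := by
    have := (Nat.cast_le (α := ℚ)).mpr KEY1
    push_cast at this
    linarith
  have c2 : ((sSup A : ℕ) : ℚ) ≤ (n : ℚ) * (sInf B : ℕ) := by
    have := (Nat.cast_le (α := ℚ)).mpr KEY2
    push_cast at this
    linarith
  rw [hPoA]
  constructor
  · rw [le_div_iff₀ hIpos]
    linarith
  · rw [div_le_iff₀ hIpos]
    linarith

end SwapGame
end
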